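/- arXiv:2104.07999 — 3 statements merged into one kernel-verified Lean document; each statement's English description precedes it below -/
import Mathlib

section
/- Let l = {(x,0,0) : x ∈ K}, m = {(0,0,x) : x ∈ K}, and n = {(f₀x + g₀x^q, f₁x + g₁x^q, f₂x + g₂x^q) : x ∈ K} for fixed f₀,g₀,f₁,g₁,f₂,g₂ ∈ K. Assume that n is a line of Q⁻(5,q) (equivalently, f₂g₀^q + f₀g₂^q = f₁g₁^q and f₀f₂^q + f₀^qf₂ + g₀g₂^q + g₀^qg₂ = f₁^{q+1} + g₁^{q+1}) and that l, m, n together span W over F. Then l, m, n are in perspective if and only if f₀^qf₂ + g₀g₂^q ∈ F, i.e. (f₀^qf₂ + g₀g₂^q)^q = f₀^qf₂ + g₀g₂^q; moreover, if f₀^qf₂ + g₀g₂^q ∉ F then Σ₁ ∩ Σ₂ ∩ Σ₃ is the zero subspace. -/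
set_option maxHeartbeats 1000000


namespace PseudoOval

variable (K : Type*) [Field K]

/-- `U` is an `F`-subspace of `W = K × K × K`, where `F = {a : K | a ^ q = a}`
is the subfield of order `q` of `K`. -/
def IsFSub (q : ℕ) (U : Set (K × K × K)) : Prop :=
  (0 : K × K × K) ∈ U ∧
  (∀ u ∈ U, ∀ v ∈ U, u + v ∈ U) ∧
  (∀ u ∈ U, -u ∈ U) ∧
  (∀ a : K, a ^ q = a → ∀ v ∈ U, a • v ∈ U)

/-- The `F`-span of a subset of `W = K × K × K`. -/
def spanF (q : ℕ) (S : Set (K × K × K)) : Set (K × K × K) :=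
  ⋂₀ {U : Set (K × K × K) | IsFSub K q U ∧ S ⊆ U}

/-- The elliptic quadratic form `Q̂(x,y,z) = y^(q+1) - x z^q - x^q z` on `W`. -/
def Qhat (q : ℕ) (v : K × K × K) : K :=
  v.2.1 ^ (q + 1) - v.1 * v.2.2 ^ q - v.1 ^ q * v.2.2

/-- The polar form of `Q̂`. -/
def bhat (q : ℕ) (v w : K × K × K) : K :=
  v.2.1 * w.2.1 ^ q + v.2.1 ^ q * w.2.1 - v.1 * w.2.2 ^ q - v.1 ^ q * w.2.2
    - v.2.2 * w.1 ^ q - v.2.2 ^ q * w.1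

/-- The perp of a subset of `W` with respect to the polar form `b̂`. -/
def perpSet (q : ℕ) (U : Set (K × K × K)) : Set (K × K × K) :=
  {v | ∀ u ∈ U, bhat K q v u = 0}

/-- A line of the elliptic quadric `Q⁻(5,q)`: a 2-dimensional `F`-subspace
(equivalently, one of cardinality `q ^ 2`) on which `Q̂` vanishes identically. -/
def IsLine (q : ℕ) (U : Set (K × K × K)) : Prop :=
  IsFSub K q U ∧ U.ncard = q ^ 2 ∧ ∀ v ∈ U, Qhat K q v = 0

/-- `Σ₁ = span_F (l₁ ∪ s₁)` where `s₁ = l₂^⊥ ∩ l₃^⊥`. -/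
def SigmaSp (q : ℕ) (l₁ l₂ l₃ : Set (K × K × K)) : Set (K × K × K) :=
  spanF K q (l₁ ∪ (perpSet K q l₂ ∩ perpSet K q l₃))

/-- Three (pairwise disjoint, spanning) lines are in perspective when
`Σ₁ ∩ Σ₂ ∩ Σ₃` has `F`-dimension 2, i.e. cardinality `q ^ 2`. -/
def InPerspective (q : ℕ) (l₁ l₂ l₃ : Set (K × K × K)) : Prop :=
  (SigmaSp K q l₁ l₂ l₃ ∩ SigmaSp K q l₂ l₁ l₃ ∩ SigmaSp K q l₃ l₁ l₂).ncard = q ^ 2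

/-- A non-degenerate hyperplane: the perp of a vector `w` with `Q̂ w ≠ 0`. -/
def IsNondegHyperplane (q : ℕ) (U : Set (K × K × K)) : Prop :=
  ∃ w : K × K × K, Qhat K q w ≠ 0 ∧ U = {v | bhat K q v w = 0}

/-- A pseudo-oval of `Q⁻(5,q)`: `q² + 1` lines, any three distinct of which span `W`. -/
def IsPseudoOval (q : ℕ) (S : Set (Set (K × K × K))) : Prop :=
  S.ncard = q ^ 2 + 1 ∧ (∀ U ∈ S, IsLine K q U) ∧
  ∀ a ∈ S, ∀ b ∈ S, ∀ c ∈ S, a ≠ b → a ≠ c → b ≠ c →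
    spanF K q (a ∪ b ∪ c) = Set.univ

/-- The set `X'` of lines of `Q⁻(5,q)` disjoint from the line `l`. -/
def Xl (q : ℕ) (l : Set (K × K × K)) : Set (Set (K × K × K)) :=
  {m | IsLine K q m ∧ m ∩ l = {0}}

/-- The relations `R₀', …, R₅'` of the association scheme `𝔛_l`. -/
def RelL (q : ℕ) (l : Set (K × K × K)) : ℕ → Set (K × K × K) → Set (K × K × K) → Prop
  | 0 => fun m n => m = n
  | 1 => fun m n => m ≠ n ∧ m ∩ n ≠ {0}
  | 2 => fun m n => m ∩ n = {0} ∧ (spanF K q (l ∪ m ∪ n)).ncard = q ^ 4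
  | 3 => fun m n => m ∩ n = {0} ∧ (spanF K q (l ∪ m ∪ n)).ncard = q ^ 5
  | 4 => fun m n => spanF K q (l ∪ m ∪ n) = Set.univ ∧ ¬ InPerspective K q l m n
  | 5 => fun m n => spanF K q (l ∪ m ∪ n) = Set.univ ∧ InPerspective K q l m n
  | _ => fun _ _ => False

/-- The data of a set `U_{p₁,p₂} = O₁ ∪ O₂` constructed on the flag `(B, l)`:
`B` is a 1-dimensional `F`-subspace of the line `l`, `Pl` is a non-degenerate
hyperplane through `B` not containing `l`, `p₁, p₂` are the two distinct lines
through `B` in `Pl` with `p₂` contained in `span_F (p₁ ∪ σ)` where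
`σ = span_F (l ∪ Pl^⊥) ∩ Pl`, and `O_i` is the set of lines of `Q⁻(5,q)`
contained in `Pl` meeting `p_i` in a 1-dimensional subspace different from `B`. -/
def IsUConstruction (q : ℕ) (l B Pl p₁ p₂ : Set (K × K × K))
    (O₁ O₂ : Set (Set (K × K × K))) : Prop :=
  IsLine K q l ∧
  IsFSub K q B ∧ B ⊆ l ∧ B.ncard = q ∧
  IsNondegHyperplane K q Pl ∧ B ⊆ Pl ∧ ¬ l ⊆ Pl ∧
  IsLine K q p₁ ∧ B ⊆ p₁ ∧ p₁ ⊆ Pl ∧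
  IsLine K q p₂ ∧ B ⊆ p₂ ∧ p₂ ⊆ Pl ∧ p₂ ≠ p₁ ∧
  p₂ ⊆ spanF K q (p₁ ∪ (spanF K q (l ∪ perpSet K q Pl) ∩ Pl)) ∧
  O₁ = {m | IsLine K q m ∧ m ⊆ Pl ∧ (m ∩ p₁).ncard = q ∧ m ∩ p₁ ≠ B} ∧
  O₂ = {m | IsLine K q m ∧ m ⊆ Pl ∧ (m ∩ p₂).ncard = q ∧ m ∩ p₂ ≠ B}

/-- The family of all sets `U_{p₁,p₂}` constructed on flags `(B, l)` of the line `l`. -/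
def UFamily (q : ℕ) (l : Set (K × K × K)) : Set (Set (Set (K × K × K))) :=
  {U | ∃ B Pl p₁ p₂ : Set (K × K × K), ∃ O₁ O₂ : Set (Set (K × K × K)),
      IsUConstruction K q l B Pl p₁ p₂ O₁ O₂ ∧ U = O₁ ∪ O₂}


section Aux
variable {K : Type*} [Field K]

theorem aux_frob_add {q : ℕ} (hq : IsPrimePow q) [Fintype K]
    (hK : Fintype.card K = q ^ 2) (a b : K) : (a + b) ^ q = a ^ q + b ^ q := by
  obtain ⟨p, k, hp, hk, rfl⟩ := hq
  have hp' : Nat.Prime p := Nat.prime_iff.mpr hp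
  haveI : CharP K (ringChar K) := ringChar.charP K
  obtain ⟨n, hrp, hcard⟩ := FiniteField.card K (ringChar K)
  have hpr : ringChar K = p := by
    have h1 : (p ^ k) ^ 2 = (ringChar K) ^ (n : ℕ) := by rw [← hK, hcard]
    have hd : p ∣ (ringChar K) ^ (n : ℕ) := by
      rw [← h1, ← pow_mul]
      exact dvd_pow_self p (by positivity)
    exact ((Nat.prime_dvd_prime_iff_eq hp' hrp).mp (hp'.dvd_of_dvd_pow hd)).symm
  haveI : CharP K p := hpr ▸ (ringChar.charP K)
  haveI : Fact p.Prime := ⟨hp'⟩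
  exact add_pow_char_pow ..

theorem aux_vanish {q : ℕ} (hq2 : 2 ≤ q) [Fintype K]
    (hK : Fintype.card K = q ^ 2) (α β : K)
    (h : ∀ x : K, α * x + β * x ^ q = 0) : α = 0 ∧ β = 0 := by
  have h1 := h 1
  rw [one_pow, mul_one, mul_one] at h1
  have hβ : β = -α := by linear_combination h1
  subst hβ
  by_cases hα : α = 0
  · simp [hα]
  exfalso
  have hfix : ∀ x : K, x ^ q = x := by
    intro x
    have hx := h x
    have : α * (x - x ^ q) = 0 := by linear_combination hx
    rcases mul_eq_zero.mp this with h' | h'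
    · exact absurd h' hα
    · linear_combination -h'
  obtain ⟨g, hg⟩ := IsCyclic.exists_generator (α := Kˣ)
  have horder : orderOf g = Nat.card Kˣ := orderOf_eq_card_of_forall_mem_zpowers hg
  have hgq : g ^ (q - 1) = 1 := by
    have hx := hfix (g : K)
    have h3 : (g : K) ^ (q - 1) * (g : K) = 1 * (g : K) := by
      rw [← pow_succ]
      have h4 : q - 1 + 1 = q := by omega
      rw [h4, hx, one_mul]
    have h2 : (g : K) ^ (q - 1) = 1 := mul_right_cancel₀ g.ne_zero h3
    ext
    push_cast
    exact h2
  have hdvd : orderOf g ∣ q - 1 := orderOf_dvd_of_pow_eq_one hgq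
  rw [horder, Nat.card_units, Nat.card_eq_fintype_card, hK] at hdvd
  have hle : q ^ 2 - 1 ≤ q - 1 := Nat.le_of_dvd (by omega) hdvd
  have hq5 : q ^ 2 = q * q := sq q
  have h6 : 2 * q ≤ q * q := Nat.mul_le_mul_right q hq2
  omega

theorem aux_mem_spanF {q : ℕ} {S : Set (K × K × K)} {v : K × K × K} (hv : v ∈ S) :
    v ∈ spanF K q S :=
  Set.mem_sInter.mpr fun _ hU => hU.2 hv

theorem aux_spanF_subset {q : ℕ} {S U : Set (K × K × K)} (hU : IsFSub K q U)
    (hS : S ⊆ U) : spanF K q S ⊆ U :=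
  fun _ hv => Set.mem_sInter.mp hv U ⟨hU, hS⟩

theorem aux_isFSub_spanF (q : ℕ) (S : Set (K × K × K)) : IsFSub K q (spanF K q S) := by
  refine ⟨?_, ?_, ?_, ?_⟩
  · exact Set.mem_sInter.mpr fun U hU => hU.1.1
  · intro u hu v hv
    exact Set.mem_sInter.mpr fun U hU =>
      hU.1.2.1 u (Set.mem_sInter.mp hu U hU) v (Set.mem_sInter.mp hv U hU)
  · intro u hu
    exact Set.mem_sInter.mpr fun U hU => hU.1.2.2.1 u (Set.mem_sInter.mp hu U hU)
  · intro a ha v hv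
    exact Set.mem_sInter.mpr fun U hU => hU.1.2.2.2 a ha v (Set.mem_sInter.mp hv U hU)


end Aux

/-- Proposition 2 (perspective criterion for `l = L(I,0,0)`, `m = L(0,0,I)`,
`n = L(F₀,F₁,F₂)`). -/
theorem statement0 (q : ℕ) (hq : IsPrimePow q) (hodd : Odd q)
    (K : Type*) [Field K] [Fintype K] (hK : Fintype.card K = q ^ 2)
    (f₀ g₀ f₁ g₁ f₂ g₂ : K)
    (l m n : Set (K × K × K))
    (hl : l = {w | ∃ x : K, w = (x, 0, 0)})
    (hm : m = {w | ∃ x : K, w = (0, 0, x)})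
    (hn : n = {w | ∃ x : K,
      w = (f₀ * x + g₀ * x ^ q, f₁ * x + g₁ * x ^ q, f₂ * x + g₂ * x ^ q)})
    (heq1 : f₂ * g₀ ^ q + f₀ * g₂ ^ q = f₁ * g₁ ^ q)
    (heq2 : f₀ * f₂ ^ q + f₀ ^ q * f₂ + g₀ * g₂ ^ q + g₀ ^ q * g₂
      = f₁ ^ (q + 1) + g₁ ^ (q + 1))
    (hspan : spanF K q (l ∪ m ∪ n) = Set.univ) :
    (InPerspective K q l m n ↔
      (f₀ ^ q * f₂ + g₀ * g₂ ^ q) ^ q = f₀ ^ q * f₂ + g₀ * g₂ ^ q) ∧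
    ((f₀ ^ q * f₂ + g₀ * g₂ ^ q) ^ q ≠ f₀ ^ q * f₂ + g₀ * g₂ ^ q →
      SigmaSp K q l m n ∩ SigmaSp K q m l n ∩ SigmaSp K q n l m = {0}) := by
  have hq2 : 2 ≤ q := hq.two_le
  have hq0 : q ≠ 0 := by omega
  have hadd : ∀ a b : K, (a + b) ^ q = a ^ q + b ^ q := aux_frob_add hq hK
  have hneg : ∀ a : K, (-a) ^ q = -(a ^ q) := fun a => Odd.neg_pow hodd a
  have hsub : ∀ a b : K, (a - b) ^ q = a ^ q - b ^ q := by
    intro a b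
    rw [sub_eq_add_neg, hadd, hneg, ← sub_eq_add_neg]
  have hqq : ∀ a : K, (a ^ q) ^ q = a := by
    intro a
    rw [← pow_mul]
    have h : q * q = Fintype.card K := by rw [hK]; ring
    rw [h, FiniteField.pow_card]
  have h0q : (0 : K) ^ q = 0 := zero_pow hq0
  have hvan : ∀ α β : K, (∀ x : K, α * x + β * x ^ q = 0) → α = 0 ∧ β = 0 :=
    fun α β h => aux_vanish hq2 hK α β h
  have hlq : ∀ f g x : K, (f * x + g * x ^ q) ^ q = f ^ q * x ^ q + g ^ q * x := by
    intro f g x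
    rw [hadd, mul_pow, mul_pow, hqq]
  -- perp of l
  have hperpl : perpSet K q l = {v : K × K × K | v.2.2 = 0} := by
    ext v
    simp only [perpSet, Set.mem_setOf_eq, hl]
    constructor
    · intro hv
      have h' : ∀ x : K, (-(v.2.2 ^ q)) * x + (-v.2.2) * x ^ q = 0 := by
        intro x
        have hb := hv (x, 0, 0) ⟨x, rfl⟩
        simp only [bhat] at hb
        rw [h0q] at hb
        linear_combination hb
      exact neg_eq_zero.mp (hvan _ _ h').2
    · intro h0 u hu
      obtain ⟨x, rfl⟩ := hu
      simp [bhat, h0, h0q]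
  -- perp of m
  have hperpm : perpSet K q m = {v : K × K × K | v.1 = 0} := by
    ext v
    simp only [perpSet, Set.mem_setOf_eq, hm]
    constructor
    · intro hv
      have h' : ∀ x : K, (-(v.1 ^ q)) * x + (-v.1) * x ^ q = 0 := by
        intro x
        have hb := hv (0, 0, x) ⟨x, rfl⟩
        simp only [bhat] at hb
        rw [h0q] at hb
        linear_combination hb
      exact neg_eq_zero.mp (hvan _ _ h').2
    · intro h0 u hu
      obtain ⟨x, rfl⟩ := hu
      simp [bhat, h0, h0q]
  -- perp of n
  have hbn : ∀ (v : K × K × K) (x : K),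
      bhat K q v (f₀ * x + g₀ * x ^ q, f₁ * x + g₁ * x ^ q, f₂ * x + g₂ * x ^ q)
      = (v.2.1 * g₁ ^ q + v.2.1 ^ q * f₁ - v.1 * g₂ ^ q - v.1 ^ q * f₂
          - v.2.2 * g₀ ^ q - v.2.2 ^ q * f₀) * x
        + (v.2.1 ^ q * g₁ + v.2.1 * f₁ ^ q - v.1 ^ q * g₂ - v.1 * f₂ ^ q
          - v.2.2 ^ q * g₀ - v.2.2 * f₀ ^ q) * x ^ q := by
    intro v x
    simp only [bhat, hlq]
    ring
  have hAq : ∀ v : K × K × K,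
      (v.2.1 * g₁ ^ q + v.2.1 ^ q * f₁ - v.1 * g₂ ^ q - v.1 ^ q * f₂
        - v.2.2 * g₀ ^ q - v.2.2 ^ q * f₀) ^ q
      = v.2.1 ^ q * g₁ + v.2.1 * f₁ ^ q - v.1 ^ q * g₂ - v.1 * f₂ ^ q
        - v.2.2 ^ q * g₀ - v.2.2 * f₀ ^ q := by
    intro v
    simp only [hsub, hadd, mul_pow, hqq]
  have hperpn : perpSet K q n = {v : K × K × K |
      v.2.1 * g₁ ^ q + v.2.1 ^ q * f₁ - v.1 * g₂ ^ q - v.1 ^ q * f₂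
        - v.2.2 * g₀ ^ q - v.2.2 ^ q * f₀ = 0} := by
    ext v
    simp only [perpSet, Set.mem_setOf_eq, hn]
    constructor
    · intro hv
      have h' : ∀ x : K, (v.2.1 * g₁ ^ q + v.2.1 ^ q * f₁ - v.1 * g₂ ^ q - v.1 ^ q * f₂
          - v.2.2 * g₀ ^ q - v.2.2 ^ q * f₀) * x
          + (v.2.1 * g₁ ^ q + v.2.1 ^ q * f₁ - v.1 * g₂ ^ q - v.1 ^ q * f₂
          - v.2.2 * g₀ ^ q - v.2.2 ^ q * f₀) ^ q * x ^ q = 0 := by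
        intro x
        rw [hAq v, ← hbn v x]
        exact hv _ ⟨x, rfl⟩
      exact (hvan _ _ h').1
    · intro h0 u hu
      obtain ⟨x, rfl⟩ := hu
      rw [hbn v x, ← hAq v, h0, h0q]
      ring
  -- Sigma 1
  have hS1 : SigmaSp K q l m n = {v : K × K × K |
      v.2.1 * g₁ ^ q + v.2.1 ^ q * f₁ = v.2.2 * g₀ ^ q + v.2.2 ^ q * f₀} := by
    apply subset_antisymm
    · apply aux_spanF_subset
      · refine ⟨by simp [h0q], ?_, ?_, ?_⟩
        · intro u hu v hv
          simp only [Set.mem_setOf_eq, Prod.fst_add, Prod.snd_add] at *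
          rw [hadd, hadd]
          linear_combination hu + hv
        · intro u hu
          simp only [Set.mem_setOf_eq, Prod.fst_neg, Prod.snd_neg] at *
          rw [hneg, hneg]
          linear_combination -hu
        · intro a ha v hv
          simp only [Set.mem_setOf_eq, Prod.smul_fst, Prod.smul_snd, smul_eq_mul] at *
          rw [mul_pow, mul_pow, ha]
          linear_combination a * hv
      · rintro v (hv | hv)
        · rw [hl] at hv
          obtain ⟨x, rfl⟩ := hv
          simp [h0q]
        · rw [hperpm, hperpn] at hv
          obtain ⟨h1, h2⟩ := hv
          simp only [Set.mem_setOf_eq] at *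
          rw [h1] at h2
          rw [h0q] at h2
          linear_combination h2
    · intro v hv
      simp only [Set.mem_setOf_eq] at hv
      have hdec : v = (v.1, 0, 0) + (0, v.2.1, v.2.2) := by
        ext <;> simp
      rw [hdec]
      apply (aux_isFSub_spanF q _).2.1
      · exact aux_mem_spanF (Set.mem_union_left _ (by rw [hl]; exact ⟨v.1, rfl⟩))
      · apply aux_mem_spanF
        apply Set.mem_union_right
        rw [hperpm, hperpn]
        refine ⟨rfl, ?_⟩
        simp only [Set.mem_setOf_eq]
        rw [h0q]
        linear_combination hv
  -- Sigma 2
  have hS2 : SigmaSp K q m l n = {v : K × K × K |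
      v.2.1 * g₁ ^ q + v.2.1 ^ q * f₁ = v.1 * g₂ ^ q + v.1 ^ q * f₂} := by
    apply subset_antisymm
    · apply aux_spanF_subset
      · refine ⟨by simp [h0q], ?_, ?_, ?_⟩
        · intro u hu v hv
          simp only [Set.mem_setOf_eq, Prod.fst_add, Prod.snd_add] at *
          rw [hadd, hadd]
          linear_combination hu + hv
        · intro u hu
          simp only [Set.mem_setOf_eq, Prod.fst_neg, Prod.snd_neg] at *
          rw [hneg, hneg]
          linear_combination -hu
        · intro a ha v hv
          simp only [Set.mem_setOf_eq, Prod.smul_fst, Prod.smul_snd, smul_eq_mul] at *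
          rw [mul_pow, mul_pow, ha]
          linear_combination a * hv
      · rintro v (hv | hv)
        · rw [hm] at hv
          obtain ⟨x, rfl⟩ := hv
          simp [h0q]
        · rw [hperpl, hperpn] at hv
          obtain ⟨h1, h2⟩ := hv
          simp only [Set.mem_setOf_eq] at *
          rw [h1] at h2
          rw [h0q] at h2
          linear_combination h2
    · intro v hv
      simp only [Set.mem_setOf_eq] at hv
      have hdec : v = (0, 0, v.2.2) + (v.1, v.2.1, 0) := by
        ext <;> simp
      rw [hdec]
      apply (aux_isFSub_spanF q _).2.1
      · exact aux_mem_spanF (Set.mem_union_left _ (by rw [hm]; exact ⟨v.2.2, rfl⟩))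
      · apply aux_mem_spanF
        apply Set.mem_union_right
        rw [hperpl, hperpn]
        refine ⟨rfl, ?_⟩
        simp only [Set.mem_setOf_eq]
        rw [h0q]
        linear_combination hv
  -- Sigma 3
  have hS3 : SigmaSp K q n l m = {v : K × K × K |
      ∃ t : K, v.1 = f₀ * t + g₀ * t ^ q ∧ v.2.2 = f₂ * t + g₂ * t ^ q} := by
    apply subset_antisymm
    · apply aux_spanF_subset
      · refine ⟨⟨0, by simp [h0q]⟩, ?_, ?_, ?_⟩
        · rintro u ⟨t, ht1, ht2⟩ v ⟨s, hs1, hs2⟩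
          refine ⟨t + s, ?_, ?_⟩ <;>
            simp only [Prod.fst_add, Prod.snd_add] <;>
            rw [hadd] <;> [linear_combination ht1 + hs1; linear_combination ht2 + hs2]
        · rintro u ⟨t, ht1, ht2⟩
          refine ⟨-t, ?_, ?_⟩ <;>
            simp only [Prod.fst_neg, Prod.snd_neg] <;>
            rw [hneg] <;> [linear_combination -ht1; linear_combination -ht2]
        · rintro a ha v ⟨t, ht1, ht2⟩
          refine ⟨a * t, ?_, ?_⟩ <;>
            simp only [Prod.smul_fst, Prod.smul_snd, smul_eq_mul] <;>
            rw [mul_pow, ha] <;> [linear_combination a * ht1; linear_combination a * ht2]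
      · rintro v (hv | hv)
        · rw [hn] at hv
          obtain ⟨x, rfl⟩ := hv
          exact ⟨x, rfl, rfl⟩
        · rw [hperpl, hperpm] at hv
          obtain ⟨h1, h2⟩ := hv
          refine ⟨0, by simp [h0q]; exact ⟨h2, h1⟩⟩
    · rintro v ⟨t, h1, h2⟩
      have hdec : v = (f₀ * t + g₀ * t ^ q, f₁ * t + g₁ * t ^ q, f₂ * t + g₂ * t ^ q)
          + (0, v.2.1 - (f₁ * t + g₁ * t ^ q), 0) := by
        ext <;> simp [h1, h2]
      rw [hdec]
      apply (aux_isFSub_spanF q _).2.1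
      · exact aux_mem_spanF (Set.mem_union_left _ (by rw [hn]; exact ⟨t, rfl⟩))
      · apply aux_mem_spanF
        apply Set.mem_union_right
        rw [hperpl, hperpm]
        exact ⟨rfl, rfl⟩
  -- φ surjective
  have hφsurj : ∀ c : K, ∃ x : K, f₁ * x + g₁ * x ^ q = c := by
    intro c
    have hU : IsFSub K q {v : K × K × K | ∃ x : K, v.2.1 = f₁ * x + g₁ * x ^ q} := by
      refine ⟨⟨0, by simp [h0q]⟩, ?_, ?_, ?_⟩
      · rintro u ⟨x, hx⟩ v ⟨y, hy⟩
        refine ⟨x + y, ?_⟩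
        simp only [Prod.snd_add, Prod.fst_add]
        rw [hadd]
        linear_combination hx + hy
      · rintro u ⟨x, hx⟩
        refine ⟨-x, ?_⟩
        simp only [Prod.snd_neg, Prod.fst_neg]
        rw [hneg]
        linear_combination -hx
      · rintro a ha v ⟨x, hx⟩
        refine ⟨a * x, ?_⟩
        simp only [Prod.smul_snd, Prod.smul_fst, smul_eq_mul]
        rw [mul_pow, ha]
        linear_combination a * hx
    have hsubU : l ∪ m ∪ n ⊆ {v : K × K × K | ∃ x : K, v.2.1 = f₁ * x + g₁ * x ^ q} := by
      rintro v ((hv | hv) | hv)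
      · rw [hl] at hv; obtain ⟨x, rfl⟩ := hv; exact ⟨0, by simp [h0q]⟩
      · rw [hm] at hv; obtain ⟨x, rfl⟩ := hv; exact ⟨0, by simp [h0q]⟩
      · rw [hn] at hv; obtain ⟨x, rfl⟩ := hv; exact ⟨x, rfl⟩
    have huniv := aux_spanF_subset hU hsubU
    rw [hspan] at huniv
    obtain ⟨x, hx⟩ := huniv (Set.mem_univ ((0 : K), c, (0 : K)))
    exact ⟨x, hx.symm⟩
  have hφinj : ∀ s : K, f₁ * s + g₁ * s ^ q = 0 → s = 0 := by
    have hsurj : Function.Surjective (fun x : K => f₁ * x + g₁ * x ^ q) := hφsurj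
    have hinj := Finite.injective_iff_surjective.mpr hsurj
    intro s hs
    have h0 : f₁ * (0 : K) + g₁ * (0 : K) ^ q = 0 := by simp [h0q]
    exact hinj (hs.trans h0.symm)
  have hΔ : f₁ ^ q * f₁ - g₁ ^ q * g₁ ≠ 0 := by
    intro h0
    have hbar : ∀ u : K, f₁ ^ q * u + (-g₁) * u ^ q = 0 := by
      intro u
      obtain ⟨x, hx⟩ := hφsurj u
      subst hx
      rw [hlq]
      linear_combination x * h0
    obtain ⟨hf, hg⟩ := hvan _ _ hbar
    have hf1 : f₁ = 0 := pow_eq_zero_iff hq0 |>.mp hf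
    have hg1 : g₁ = 0 := neg_eq_zero.mp hg
    obtain ⟨x, hx⟩ := hφsurj 1
    rw [hf1, hg1] at hx
    simp at hx
  have hψ0 : ∀ d : K, d * g₁ ^ q + d ^ q * f₁ = 0 → d = 0 := by
    intro d hd
    have hd' : d ^ q * g₁ + d * f₁ ^ q = 0 := by
      have h1 := congrArg (· ^ q) hd
      rw [hadd, mul_pow, mul_pow, hqq, hqq, h0q] at h1
      linear_combination h1
    have h2 : (f₁ ^ q * f₁ - g₁ ^ q * g₁) * d = 0 := by
      linear_combination f₁ * hd' - g₁ * hd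
    rcases mul_eq_zero.mp h2 with h | h
    · exact absurd h hΔ
    · exact h
  have hψinj : ∀ y y' : K,
      y * g₁ ^ q + y ^ q * f₁ = y' * g₁ ^ q + y' ^ q * f₁ → y = y' := by
    intro y y' h
    have hdd : (y - y') * g₁ ^ q + (y - y') ^ q * f₁ = 0 := by
      rw [hsub]
      linear_combination h
    exact sub_eq_zero.mp (hψ0 _ hdd)
  have hψsurj : ∀ c : K, ∃ y : K, y * g₁ ^ q + y ^ q * f₁ = c := by
    have hi : Function.Injective (fun y : K => y * g₁ ^ q + y ^ q * f₁) :=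
      fun a b hab => hψinj a b hab
    exact Finite.injective_iff_surjective.mp hi
  have hDq : (f₀ ^ q * f₂ + g₀ * g₂ ^ q) ^ q = f₀ * f₂ ^ q + g₀ ^ q * g₂ := by
    rw [hadd, mul_pow, mul_pow, hqq, hqq]
  have heq1q : f₂ ^ q * g₀ + f₀ ^ q * g₂ = f₁ ^ q * g₁ := by
    have h1 := congrArg (· ^ q) heq1
    rw [hadd, mul_pow, mul_pow, mul_pow, hqq, hqq, hqq] at h1
    exact h1
  have heq2' : f₀ * f₂ ^ q + f₀ ^ q * f₂ + g₀ * g₂ ^ q + g₀ ^ q * g₂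
      = f₁ ^ q * f₁ + g₁ ^ q * g₁ := by
    rw [heq2, pow_succ, pow_succ]
  have hQ : ∀ s : K, (f₁ * s + g₁ * s ^ q) ^ q * (f₁ * s + g₁ * s ^ q)
      = (f₀ * s + g₀ * s ^ q) * ((f₂ * s + g₂ * s ^ q) ^ q)
        + ((f₀ * s + g₀ * s ^ q) ^ q) * (f₂ * s + g₂ * s ^ q) := by
    intro s
    rw [hlq, hlq, hlq]
    linear_combination (-(s * s)) * heq1 - (s ^ q * s) * heq2' - (s ^ q * s ^ q) * heq1q
  have hset : SigmaSp K q l m n ∩ SigmaSp K q m l n ∩ SigmaSp K q n l m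
      = {v : K × K × K |
          (v.2.1 * g₁ ^ q + v.2.1 ^ q * f₁ = v.2.2 * g₀ ^ q + v.2.2 ^ q * f₀)
          ∧ (v.2.1 * g₁ ^ q + v.2.1 ^ q * f₁ = v.1 * g₂ ^ q + v.1 ^ q * f₂)
          ∧ ∃ t : K, v.1 = f₀ * t + g₀ * t ^ q ∧ v.2.2 = f₂ * t + g₂ * t ^ q} := by
    rw [hS1, hS2, hS3]
    ext v
    simp only [Set.mem_inter_iff, Set.mem_setOf_eq]
    exact and_assoc
  have hDcase : (f₀ ^ q * f₂ + g₀ * g₂ ^ q) ^ q ≠ f₀ ^ q * f₂ + g₀ * g₂ ^ q →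
      SigmaSp K q l m n ∩ SigmaSp K q m l n ∩ SigmaSp K q n l m = {0} := by
    intro hD
    rw [hset]
    ext v
    simp only [Set.mem_setOf_eq, Set.mem_singleton_iff]
    constructor
    · rintro ⟨ha, hb, t, hx, hz⟩
      rw [hx, hlq] at hb
      rw [hz, hlq] at ha
      have ht : (f₀ * f₂ ^ q + g₀ ^ q * g₂ - (f₀ ^ q * f₂ + g₀ * g₂ ^ q)) * t ^ q = 0 := by
        linear_combination hb - ha
      have hfac : f₀ * f₂ ^ q + g₀ ^ q * g₂ - (f₀ ^ q * f₂ + g₀ * g₂ ^ q) ≠ 0 := by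
        intro h
        apply hD
        rw [hDq]
        linear_combination h
      have ht0 : t = 0 := by
        have h8 := (mul_eq_zero.mp ht).resolve_left hfac
        exact pow_eq_zero_iff hq0 |>.mp h8
      subst ht0
      rw [h0q] at hx hz ha
      have hx0 : v.1 = 0 := by rw [hx]; ring
      have hz0 : v.2.2 = 0 := by rw [hz]; ring
      have hy0 : v.2.1 = 0 := by
        apply hψ0
        linear_combination ha
      exact Prod.ext_iff.mpr ⟨hx0, Prod.ext_iff.mpr ⟨hy0, hz0⟩⟩
    · rintro rfl
      refine ⟨?_, ?_, 0, ?_, ?_⟩ <;> simp [h0q]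
  have hPcase : (f₀ ^ q * f₂ + g₀ * g₂ ^ q) ^ q = f₀ ^ q * f₂ + g₀ * g₂ ^ q →
      InPerspective K q l m n := by
    intro hD
    have hD' : f₀ * f₂ ^ q + g₀ ^ q * g₂ = f₀ ^ q * f₂ + g₀ * g₂ ^ q := by
      rw [← hDq]
      exact hD
    choose inv hinv using hψsurj
    obtain ⟨Φ, hΦ1, hΦ2, hΦ3⟩ : ∃ Φ : K → K × K × K,
        (∀ t, (Φ t).1 = f₀ * t + g₀ * t ^ q) ∧
        (∀ t, (Φ t).2.2 = f₂ * t + g₂ * t ^ q) ∧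
        (∀ t, (Φ t).2.1 * g₁ ^ q + ((Φ t).2.1) ^ q * f₁
          = (f₂ * t + g₂ * t ^ q) * g₀ ^ q + (f₂ ^ q * t ^ q + g₂ ^ q * t) * f₀) := by
      exact ⟨fun t => (f₀ * t + g₀ * t ^ q,
        inv ((f₂ * t + g₂ * t ^ q) * g₀ ^ q + (f₂ ^ q * t ^ q + g₂ ^ q * t) * f₀),
        f₂ * t + g₂ * t ^ q), fun t => rfl, fun t => rfl, fun t => hinv _⟩
    have hrange : SigmaSp K q l m n ∩ SigmaSp K q m l n ∩ SigmaSp K q n l m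
        = Set.range Φ := by
      rw [hset]
      ext v
      simp only [Set.mem_setOf_eq, Set.mem_range]
      constructor
      · rintro ⟨ha, hb, t, hx, hz⟩
        refine ⟨t, ?_⟩
        have hy : (Φ t).2.1 = v.2.1 := by
          apply hψinj
          rw [hΦ3 t]
          rw [hz, hlq] at ha
          linear_combination -ha
        exact Prod.ext_iff.mpr ⟨(hΦ1 t).trans hx.symm,
          Prod.ext_iff.mpr ⟨hy, (hΦ2 t).trans hz.symm⟩⟩
      · rintro ⟨t, rfl⟩
        refine ⟨?_, ?_, t, hΦ1 t, hΦ2 t⟩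
        · rw [hΦ3 t, hΦ2 t, hlq]
        · rw [hΦ3 t, hΦ1 t, hlq]
          linear_combination t ^ q * hD'
    have hΦinj : Function.Injective Φ := by
      intro t t' h
      have hx1 : f₀ * t + g₀ * t ^ q = f₀ * t' + g₀ * t' ^ q := by
        have h9 := congrArg Prod.fst h
        rw [hΦ1 t, hΦ1 t'] at h9
        exact h9
      have hz1 : f₂ * t + g₂ * t ^ q = f₂ * t' + g₂ * t' ^ q := by
        have h9 := congrArg (fun v : K × K × K => v.2.2) h
        rw [hΦ2 t, hΦ2 t'] at h9
        exact h9
      have hXs : f₀ * (t - t') + g₀ * (t - t') ^ q = 0 := by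
        rw [hsub]
        linear_combination hx1
      have hZs : f₂ * (t - t') + g₂ * (t - t') ^ q = 0 := by
        rw [hsub]
        linear_combination hz1
      have h5 := hQ (t - t')
      rw [hXs, hZs] at h5
      rw [h0q] at h5
      have h6 : (f₁ * (t - t') + g₁ * (t - t') ^ q) ^ q
          * (f₁ * (t - t') + g₁ * (t - t') ^ q) = 0 := by
        rw [h5]
        ring
      have h7 : f₁ * (t - t') + g₁ * (t - t') ^ q = 0 := by
        rcases mul_eq_zero.mp h6 with h' | h'
        · exact pow_eq_zero_iff hq0 |>.mp h'
        · exact h'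
      exact sub_eq_zero.mp (hφinj _ h7)
    unfold InPerspective
    rw [hrange, ← Set.image_univ, Set.ncard_image_of_injective _ hΦinj, Set.ncard_univ,
      Nat.card_eq_fintype_card, hK]
  refine ⟨⟨?_, hPcase⟩, hDcase⟩
  intro hPers
  by_contra hD
  have h0 := hDcase hD
  unfold InPerspective at hPers
  rw [h0, Set.ncard_singleton] at hPers
  have h4 : 4 ≤ q ^ 2 := by nlinarith
  omega


end PseudoOval
end

section
/- Fix θ ∈ K with θ ≠ 0 and θ^q = −θ, and set ξ = θ² ∈ F. Let B = F·(1,0,0) and l = {(x,0,0) : x ∈ K}, a line of Q⁻(5,q) containing B. For y ∈ K let l_y = {((2ξ − y^{q+1})x + (2ξ + y^{q+1})x^q, 2θy(x − x^q), 2ξ(x − x^q)) : x ∈ K}. Then: (1) the lines of Q⁻(5,q) containing B and different from l are exactly the subspaces l_y for y ∈ K; (2) every non-degenerate hyperplane through B not containing l equals Π = ((α,β,θ))^⊥ for some α, β ∈ K with β^{q+1} − θ(α^q − α) ≠ 0, and for such Π one has l_y ⊆ Π if and only if y^{q+1} − (β^qy + βy^q) + θ(α^q − α) = 0; (3) setting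 σ = span_F(l ∪ Π^⊥) ∩ Π, for any y₁ ≠ y₂ in K both satisfying the equation in (2), one has l_{y₂} ⊆ span_F(l_{y₁} ∪ σ) if and only if y₂ = 2β − y₁ (i.e. the involution induced by σ on the lines of Q⁻(5,q) through B in Π sends l_y to l_{2β−y}). -/
namespace PseudoOval

variable (K : Type*) [Field K]

/-! ### Auxiliary lemmas -/

theorem subset_spanF' (q : ℕ) (S : Set (K × K × K)) : S ⊆ spanF K q S := by
  intro v hv
  rw [spanF, Set.mem_sInter]
  exact fun V hV => hV.2 hv

theorem spanF_subset' {q : ℕ} {S U : Set (K × K × K)} (hU : IsFSub K q U) (hSU : S ⊆ U) :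
    spanF K q S ⊆ U :=
  Set.sInter_subset_of_mem ⟨hU, hSU⟩

theorem spanF_eq' {q : ℕ} {S U : Set (K × K × K)} (hU : IsFSub K q U) (hSU : S ⊆ U)
    (hmin : ∀ V : Set (K × K × K), IsFSub K q V → S ⊆ V → U ⊆ V) : spanF K q S = U := by
  refine subset_antisymm (spanF_subset' K hU hSU) ?_
  intro v hv
  rw [spanF, Set.mem_sInter]
  exact fun V hV => hmin V hV.1 hV.2 hv

theorem frobSetup' {K : Type*} [Field K] [Fintype K] (q : ℕ) (hq : IsPrimePow q) (hodd : Odd q)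
    (hK : Fintype.card K = q ^ 2) :
    (∀ a b : K, (a + b) ^ q = a ^ q + b ^ q) ∧ (∀ a : K, (a ^ q) ^ q = a) ∧ (2 : K) ≠ 0 := by
  have hqq : ∀ a : K, (a ^ q) ^ q = a := by
    intro a
    rw [← pow_mul, ← sq, ← hK, FiniteField.pow_card]
  obtain ⟨p, n, hp, hn, rfl⟩ := hq
  have hp' : p.Prime := Nat.prime_iff.mpr hp
  haveI := Fact.mk hp'
  have hpodd : Odd p := by
    rcases Nat.even_or_odd p with he | ho
    · exfalso
      have hev : Even (p ^ n) := Nat.even_pow.mpr ⟨he, by omega⟩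
      exact (Nat.not_odd_iff_even.mpr hev) hodd
    · exact ho
  have hchar : CharP K p := by
    have h0 : ((Fintype.card K : ℕ) : K) = 0 := FiniteField.cast_card_eq_zero K
    rw [hK] at h0
    have hdvd : ringChar K ∣ (p ^ n) ^ 2 :=
      (CharP.cast_eq_zero_iff K (ringChar K) ((p ^ n) ^ 2)).mp h0
    have hprime : (ringChar K).Prime := CharP.char_is_prime K (ringChar K)
    have hrp : ringChar K = p := by
      have : ringChar K ∣ p := hprime.dvd_of_dvd_pow (hprime.dvd_of_dvd_pow
        (by rwa [← pow_mul, mul_comm, pow_mul] at hdvd))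
      exact (Nat.prime_dvd_prime_iff_eq hprime hp').mp this
    rw [← hrp]; exact ringChar.charP K
  haveI := hchar
  refine ⟨fun a b => add_pow_char_pow a b p n, hqq, ?_⟩
  have h2 : ((2 : ℕ) : K) ≠ 0 := by
    rw [Ne, CharP.cast_eq_zero_iff K p 2]
    intro h
    have := (Nat.prime_dvd_prime_iff_eq hp' Nat.prime_two).mp h
    rcases hpodd with ⟨k, hk⟩; omega
  simpa using h2

set_option maxHeartbeats 2000000 in
/-- Lemma 8: lines through `B = F·(1,0,0)`, non-degenerate hyperplanes through `B`
not containing `l`, and the involution induced by `σ`. -/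
theorem statement1 (q : ℕ) (hq : IsPrimePow q) (hodd : Odd q)
    (K : Type*) [Field K] [Fintype K] (hK : Fintype.card K = q ^ 2)
    (θ : K) (hθ0 : θ ≠ 0) (hθ : θ ^ q = -θ)
    (B l : Set (K × K × K))
    (hB : B = {w | ∃ a : K, a ^ q = a ∧ w = (a, 0, 0)})
    (hl : l = {w | ∃ x : K, w = (x, 0, 0)})
    (lY : K → Set (K × K × K))
    (hlY : ∀ y : K, lY y = {w | ∃ x : K,
      w = ((2 * θ ^ 2 - y ^ (q + 1)) * x + (2 * θ ^ 2 + y ^ (q + 1)) * x ^ q,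
           2 * θ * y * (x - x ^ q),
           2 * θ ^ 2 * (x - x ^ q))}) :
    -- (1) the lines of Q⁻(5,q) through B other than l are exactly the l_y, y ∈ K
    (∀ U : Set (K × K × K),
        (IsLine K q U ∧ B ⊆ U ∧ U ≠ l) ↔ (∃ y : K, U = lY y)) ∧
    -- (2) non-degenerate hyperplanes through B not containing l have the stated form
    (∀ Pl : Set (K × K × K),
        IsNondegHyperplane K q Pl → B ⊆ Pl → ¬ l ⊆ Pl →
        ∃ α β : K, β ^ (q + 1) - θ * (α ^ q - α) ≠ 0 ∧
          Pl = {v | bhat K q v (α, β, θ) = 0}) ∧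
    -- for any such hyperplane:
    (∀ α β : K, β ^ (q + 1) - θ * (α ^ q - α) ≠ 0 →
        -- (2') l_y lies in Π iff the displayed equation holds
        (∀ y : K, lY y ⊆ {v | bhat K q v (α, β, θ) = 0} ↔
          y ^ (q + 1) - (β ^ q * y + β * y ^ q) + θ * (α ^ q - α) = 0) ∧
        -- (3) the involution induced by σ maps l_{y₁} to l_{2β - y₁}
        (∀ y₁ y₂ : K, y₁ ≠ y₂ →
          y₁ ^ (q + 1) - (β ^ q * y₁ + β * y₁ ^ q) + θ * (α ^ q - α) = 0 →
          y₂ ^ (q + 1) - (β ^ q * y₂ + β * y₂ ^ q) + θ * (α ^ q - α) = 0 →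
          (lY y₂ ⊆ spanF K q (lY y₁ ∪
              (spanF K q (l ∪ perpSet K q {v | bhat K q v (α, β, θ) = 0}) ∩
                {v | bhat K q v (α, β, θ) = 0})) ↔
            y₂ = 2 * β - y₁))) := by
  -- foundations
  obtain ⟨hF, hqq, h2⟩ := frobSetup' q hq hodd hK
  have hq0 : q ≠ 0 := by have := hq.one_lt; omega
  have hneg : ∀ a : K, (-a) ^ q = -(a ^ q) := fun a => hodd.neg_pow a
  have hsub : ∀ a b : K, (a - b) ^ q = a ^ q - b ^ q := by
    intro a b; rw [sub_eq_add_neg, hF, hneg, ← sub_eq_add_neg]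
  have h2q : (2 : K) ^ q = 2 := by
    have h := hF 1 1
    norm_num at h
    exact h
  have hq1 : ∀ a : K, a ^ (q + 1) = a ^ q * a := fun a => pow_succ a q
  have hθ2 : (θ ^ 2) ^ q = θ ^ 2 := by rw [pow_right_comm, hθ]; ring
  have hθ2ne : θ ^ 2 ≠ 0 := pow_ne_zero 2 hθ0
  have he1B : ((1 : K), (0 : K), (0 : K)) ∈ B := by rw [hB]; exact ⟨1, one_pow q, rfl⟩
  -- basic properties of the lines lY
  have hlYFSub : ∀ y : K, IsFSub K q (lY y) := by
    intro y
    refine ⟨?_, ?_, ?_, ?_⟩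
    · rw [hlY]
      refine ⟨0, ?_⟩
      simp [zero_pow hq0, Prod.ext_iff]
    · intro u hu v hv
      rw [hlY] at hu hv ⊢
      obtain ⟨x, rfl⟩ := hu
      obtain ⟨x', rfl⟩ := hv
      refine ⟨x + x', ?_⟩
      simp only [Prod.mk_add_mk, Prod.mk.injEq, hF]
      refine ⟨by ring, by ring, by ring⟩
    · intro u hu
      rw [hlY] at hu ⊢
      obtain ⟨x, rfl⟩ := hu
      refine ⟨-x, ?_⟩
      simp only [Prod.neg_mk, Prod.mk.injEq, hneg]
      refine ⟨by ring, by ring, by ring⟩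
    · intro a ha v hv
      rw [hlY] at hv ⊢
      obtain ⟨x, rfl⟩ := hv
      refine ⟨a * x, ?_⟩
      simp only [Prod.smul_mk, smul_eq_mul, Prod.mk.injEq, mul_pow, ha]
      refine ⟨by ring, by ring, by ring⟩
  have hlYcard : ∀ y : K, (lY y).ncard = q ^ 2 := by
    intro y
    have hset : lY y = (fun x : K =>
        ((2 * θ ^ 2 - y ^ (q + 1)) * x + (2 * θ ^ 2 + y ^ (q + 1)) * x ^ q,
          2 * θ * y * (x - x ^ q), 2 * θ ^ 2 * (x - x ^ q))) '' Set.univ := by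
      rw [hlY]
      ext v
      simp [Set.mem_image, eq_comm]
    have hinj : Function.Injective (fun x : K =>
        ((2 * θ ^ 2 - y ^ (q + 1)) * x + (2 * θ ^ 2 + y ^ (q + 1)) * x ^ q,
          2 * θ * y * (x - x ^ q), 2 * θ ^ 2 * (x - x ^ q))) := by
      intro x x' h
      simp only [Prod.mk.injEq] at h
      obtain ⟨h1, _, h3⟩ := h
      have h8 : (8 : K) * θ ^ 4 * (x - x') = 0 := by
        linear_combination 2 * θ ^ 2 * h1 + (2 * θ ^ 2 + y ^ (q + 1)) * h3
      have h8ne : (8 : K) * θ ^ 4 ≠ 0 := by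
        have : (8 : K) = 2 * 2 * 2 := by norm_num
        rw [this]
        exact mul_ne_zero (mul_ne_zero (mul_ne_zero h2 h2) h2) (pow_ne_zero 4 hθ0)
      have := (mul_eq_zero.mp h8).resolve_left h8ne
      exact sub_eq_zero.mp this
    rw [hset, Set.ncard_image_of_injective _ hinj, Set.ncard_univ,
      Nat.card_eq_fintype_card, hK]
  have hlYQ : ∀ y : K, ∀ v ∈ lY y, Qhat K q v = 0 := by
    intro y v hv
    rw [hlY] at hv
    obtain ⟨x, rfl⟩ := hv
    simp only [Qhat, hq1, mul_pow, hsub, hF, hneg, hqq, hθ2, hθ, h2q, one_pow]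
    ring
  have hBlY : ∀ y : K, B ⊆ lY y := by
    intro y w hw
    rw [hB] at hw
    obtain ⟨a, ha, rfl⟩ := hw
    rw [hlY]
    refine ⟨a / (2 * (2 * θ ^ 2)), ?_⟩
    have hx : (a / (2 * (2 * θ ^ 2))) ^ q = a / (2 * (2 * θ ^ 2)) := by
      simp only [div_pow, mul_pow, h2q, hθ2, ha]
    rw [hx]
    simp only [Prod.mk.injEq, sub_self, mul_zero, and_true, eq_self_iff_true]
    field_simp
    ring
  have hlYnel : ∀ y : K, lY y ≠ l := by
    intro y h
    have hmem : ((2 * θ ^ 2 - y ^ (q + 1)) * θ + (2 * θ ^ 2 + y ^ (q + 1)) * θ ^ q,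
        2 * θ * y * (θ - θ ^ q), 2 * θ ^ 2 * (θ - θ ^ q)) ∈ lY y := by
      rw [hlY]; exact ⟨θ, rfl⟩
    rw [h, hl] at hmem
    obtain ⟨x, hx⟩ := hmem
    have h3 := congrArg (fun v : K × K × K => v.2.2) hx
    simp only [hθ] at h3
    have h4 : (4 : K) * θ ^ 3 = 0 := by linear_combination h3
    have : θ ^ 3 ≠ 0 := pow_ne_zero 3 hθ0
    have h4' : (4 : K) = 2 * 2 := by norm_num
    have : (4 : K) ≠ 0 := by rw [h4']; exact mul_ne_zero h2 h2
    exact (mul_ne_zero this ‹θ ^ 3 ≠ 0›) h4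
  have hvYmem : ∀ y : K, (-(y ^ (q + 1)) / (2 * θ), y, θ) ∈ lY y := by
    intro y
    rw [hlY]
    refine ⟨1 / (2 * (2 * θ)), ?_⟩
    have hx : (1 / (2 * (2 * θ))) ^ q = -(1 / (2 * (2 * θ))) := by
      simp only [div_pow, mul_pow, h2q, hθ, one_pow]
      field_simp
    rw [hx]
    simp only [Prod.mk.injEq]
    refine ⟨?_, ?_, ?_⟩
    · field_simp; ring
    · field_simp; ring
    · field_simp; ring
  have he1mem : ∀ y : K, ((1 : K), (0 : K), (0 : K)) ∈ lY y := by
    intro y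
    have := hBlY y he1B
    exact this
  have hlYsubU : ∀ (y : K) (U : Set (K × K × K)), IsFSub K q U →
      ((1 : K), (0 : K), (0 : K)) ∈ U → (-(y ^ (q + 1)) / (2 * θ), y, θ) ∈ U →
      lY y ⊆ U := by
    intro y U hU he1 hvY v hv
    rw [hlY] at hv
    obtain ⟨x, rfl⟩ := hv
    have hdecomp :
        ((2 * θ ^ 2 - y ^ (q + 1)) * x + (2 * θ ^ 2 + y ^ (q + 1)) * x ^ q,
          2 * θ * y * (x - x ^ q), 2 * θ ^ 2 * (x - x ^ q)) =
        (2 * θ ^ 2 * (x + x ^ q)) • ((1 : K), (0 : K), (0 : K)) +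
          (2 * θ * (x - x ^ q)) • (-(y ^ (q + 1)) / (2 * θ), y, θ) := by
      simp only [Prod.smul_mk, smul_eq_mul, Prod.mk_add_mk, Prod.mk.injEq]
      refine ⟨by field_simp; ring, by ring, by ring⟩
    rw [hdecomp]
    have hc : (2 * θ ^ 2 * (x + x ^ q)) ^ q = 2 * θ ^ 2 * (x + x ^ q) := by
      simp only [mul_pow, h2q, hθ2, hF, hqq]
      ring
    have hd : (2 * θ * (x - x ^ q)) ^ q = 2 * θ * (x - x ^ q) := by
      simp only [mul_pow, h2q, hθ, hsub, hqq]
      ring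
    exact hU.2.1 _ (hU.2.2.2 _ hc _ he1) _ (hU.2.2.2 _ hd _ hvY)
  have hNq : ∀ u : K, (u ^ (q + 1)) ^ q = u ^ (q + 1) := by
    intro u
    rw [hq1, mul_pow, hqq]
    ring
  have hlcard : l.ncard = q ^ 2 := by
    have hset : l = (fun x : K => ((x : K), (0 : K), (0 : K))) '' Set.univ := by
      rw [hl]; ext v; simp [Set.mem_image, eq_comm]
    have hinj : Function.Injective (fun x : K => ((x : K), (0 : K), (0 : K))) := by
      intro x x' h
      simpa [Prod.mk.injEq] using h
    rw [hset, Set.ncard_image_of_injective _ hinj, Set.ncard_univ,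
      Nat.card_eq_fintype_card, hK]
  have part1 : ∀ U : Set (K × K × K),
      (IsLine K q U ∧ B ⊆ U ∧ U ≠ l) ↔ (∃ y : K, U = lY y) := by
    intro U
    constructor
    · rintro ⟨⟨hUsub, hUcard, hUQ⟩, hBU, hUnl⟩
      have he1U : ((1 : K), (0 : K), (0 : K)) ∈ U := hBU he1B
      -- the key step: if U contains a vector with third coordinate θ, then U = lY y'
      have hmain : ∀ a' y' : K, (a', y', θ) ∈ U → U = lY y' := by
        intro a' y' hmem
        have hQ3 : Qhat K q (a', y', θ) = 0 := hUQ _ hmem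
        simp only [Qhat, hθ] at hQ3
        have hfq : (-(a' + y' ^ (q + 1) / (2 * θ))) ^ q = -(a' + y' ^ (q + 1) / (2 * θ)) := by
          rw [hneg, hF, div_pow, hNq, mul_pow, h2q, hθ]
          have : a' ^ q = a' + y' ^ (q + 1) / θ := by
            field_simp
            linear_combination -hQ3
          rw [this]
          field_simp
          ring
        have hvYU : (-(y' ^ (q + 1)) / (2 * θ), y', θ) ∈ U := by
          have hdec : ((-(y' ^ (q + 1)) / (2 * θ), y', θ) : K × K × K) =
              (a', y', θ) + (-(a' + y' ^ (q + 1) / (2 * θ))) • ((1 : K), (0 : K), (0 : K)) := by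
            simp only [Prod.smul_mk, smul_eq_mul, Prod.mk_add_mk, Prod.mk.injEq,
              mul_one, mul_zero, add_zero]
            exact ⟨by ring, trivial⟩
          rw [hdec]
          exact hUsub.2.1 _ hmem _ (hUsub.2.2.2 _ hfq _ he1U)
        refine (Set.eq_of_subset_of_ncard_le (hlYsubU y' U hUsub he1U hvYU) ?_ (Set.toFinite U)).symm
        rw [hUcard, hlYcard]
      have hUnotsub : ¬ U ⊆ l := by
        intro hsubl
        exact hUnl (Set.eq_of_subset_of_ncard_le hsubl (by rw [hlcard, hUcard]) (Set.toFinite l))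
      obtain ⟨v, hvU, hvnl⟩ := Set.not_subset.mp hUnotsub
      obtain ⟨a, b, c⟩ := v
      have hsum : ((a + 1 : K), b, c) ∈ U := by
        have := hUsub.2.1 _ hvU _ he1U
        simpa [Prod.mk_add_mk] using this
      have hQ1 : Qhat K q (a, b, c) = 0 := hUQ _ hvU
      have hQ2 : Qhat K q (a + 1, b, c) = 0 := hUQ _ hsum
      simp only [Qhat] at hQ1 hQ2
      rw [hF, one_pow] at hQ2
      have hcq : c ^ q = -c := by linear_combination hQ1 - hQ2
      have hc0 : c ≠ 0 := by
        intro hc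
        apply hvnl
        rw [hl]
        refine ⟨a, ?_⟩
        have hb : b = 0 := by
          rw [hc] at hQ1
          simp only [zero_pow hq0, mul_zero, sub_zero, hq1] at hQ1
          rcases mul_eq_zero.mp hQ1 with h | h
          · exact pow_eq_zero_iff hq0 |>.mp h
          · exact h
        rw [hb, hc]
      have htq : (θ / c) ^ q = θ / c := by
        rw [div_pow, hθ, hcq, neg_div_neg_eq]
      have htv : ((θ / c) * a, (θ / c) * b, θ) ∈ U := by
        have hsm := hUsub.2.2.2 _ htq _ hvU
        have he : (θ / c) • ((a, b, c) : K × K × K) = ((θ / c) * a, (θ / c) * b, θ) := by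
          simp only [Prod.smul_mk, smul_eq_mul, Prod.mk.injEq, true_and]
          exact div_mul_cancel₀ θ hc0
        rwa [he] at hsm
      exact ⟨(θ / c) * b, hmain _ _ htv⟩
    · rintro ⟨y, rfl⟩
      exact ⟨⟨hlYFSub y, hlYcard y, hlYQ y⟩, hBlY y, hlYnel y⟩
  have hbsymm : ∀ v w : K × K × K, bhat K q v w = bhat K q w v := by
    intro v w; simp only [bhat]; ring
  have hbs2 : ∀ s : K, s ^ q = s → ∀ v w : K × K × K,
      bhat K q v (s • w) = s * bhat K q v w := by
    intro s hs v w
    obtain ⟨w1, w2, w3⟩ := w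
    simp only [Prod.smul_mk, smul_eq_mul, bhat, mul_pow, hs]
    ring
  have part2 : ∀ Pl : Set (K × K × K),
      IsNondegHyperplane K q Pl → B ⊆ Pl → ¬ l ⊆ Pl →
      ∃ α β : K, β ^ (q + 1) - θ * (α ^ q - α) ≠ 0 ∧
        Pl = {v | bhat K q v (α, β, θ) = 0} := by
    intro Pl hPl hBPl hlPl
    obtain ⟨w0, hQw0, rfl⟩ := hPl
    obtain ⟨α₀, β₀, γ₀⟩ := w0
    have h1B : bhat K q ((1 : K), (0 : K), (0 : K)) (α₀, β₀, γ₀) = 0 := hBPl he1B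
    simp only [bhat, one_pow, zero_pow hq0, zero_mul, mul_zero] at h1B
    have hγq : γ₀ ^ q = -γ₀ := by linear_combination -h1B
    have hγ0 : γ₀ ≠ 0 := by
      intro h0
      apply hlPl
      intro v hv
      rw [hl] at hv
      obtain ⟨x, rfl⟩ := hv
      show bhat K q (x, 0, 0) (α₀, β₀, γ₀) = 0
      rw [h0] at hγq ⊢
      simp only [bhat, zero_pow hq0, zero_mul, mul_zero]
      ring
    simp only [Qhat] at hQw0
    refine ⟨α₀ * θ / γ₀, β₀ * θ / γ₀, ?_, ?_⟩
    · have key : (β₀ * θ / γ₀) ^ (q + 1) - θ * ((α₀ * θ / γ₀) ^ q - α₀ * θ / γ₀) =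
          (θ / γ₀) ^ 2 * (β₀ ^ (q + 1) - α₀ * γ₀ ^ q - α₀ ^ q * γ₀) := by
        simp only [hq1, div_pow, mul_pow, hθ, hγq]
        field_simp
        ring
      rw [key]
      exact mul_ne_zero (pow_ne_zero 2 (div_ne_zero hθ0 hγ0)) hQw0
    · have hsc : ∀ v : K × K × K,
          bhat K q v (α₀ * θ / γ₀, β₀ * θ / γ₀, θ) = (θ / γ₀) * bhat K q v (α₀, β₀, γ₀) := by
        intro v
        obtain ⟨v1, v2, v3⟩ := v
        simp only [bhat, div_pow, mul_pow, hθ, hγq]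
        field_simp
      ext v
      simp only [Set.mem_setOf_eq, hsc v, mul_eq_zero]
      have hne : θ / γ₀ ≠ 0 := div_ne_zero hθ0 hγ0
      tauto
  refine ⟨part1, part2, ?_⟩
  intro α β hΔ
  have hΔ' : β ^ q * β - θ * (α ^ q - α) ≠ 0 := by rwa [hq1 β] at hΔ
  have hΔq : (β ^ q * β - θ * (α ^ q - α)) ^ q = β ^ q * β - θ * (α ^ q - α) := by
    simp only [hsub, hF, mul_pow, hneg, hqq, hθ]
    ring
  have hbhat_fY : ∀ y x : K,
      bhat K q ((2 * θ ^ 2 - y ^ (q + 1)) * x + (2 * θ ^ 2 + y ^ (q + 1)) * x ^ q,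
        2 * θ * y * (x - x ^ q), 2 * θ ^ 2 * (x - x ^ q)) (α, β, θ) =
      (2 * θ * (x - x ^ q)) *
        (-(y ^ (q + 1) - (β ^ q * y + β * y ^ q) + θ * (α ^ q - α))) := by
    intro y x
    simp only [bhat, hq1, mul_pow, hsub, hF, hneg, hqq, hθ2, hθ, h2q, one_pow]
    ring
  have part2' : ∀ y : K, lY y ⊆ {v | bhat K q v (α, β, θ) = 0} ↔
      y ^ (q + 1) - (β ^ q * y + β * y ^ q) + θ * (α ^ q - α) = 0 := by
    intro y
    constructor
    · intro hsubs
      have hmem : ((2 * θ ^ 2 - y ^ (q + 1)) * θ + (2 * θ ^ 2 + y ^ (q + 1)) * θ ^ q,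
          2 * θ * y * (θ - θ ^ q), 2 * θ ^ 2 * (θ - θ ^ q)) ∈ lY y := by
        rw [hlY]; exact ⟨θ, rfl⟩
      have h0 := hsubs hmem
      simp only [Set.mem_setOf_eq] at h0
      rw [hbhat_fY y θ] at h0
      have h4 : 2 * θ * (θ - θ ^ q) ≠ 0 := by
        rw [hθ]
        have he : 2 * θ * (θ - -θ) = 2 * 2 * θ ^ 2 := by ring
        rw [he]
        exact mul_ne_zero (mul_ne_zero h2 h2) hθ2ne
      have h5 := (mul_eq_zero.mp h0).resolve_left h4
      linear_combination -h5
    · intro hE v hv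
      rw [hlY] at hv
      obtain ⟨x, rfl⟩ := hv
      simp only [Set.mem_setOf_eq]
      rw [hbhat_fY y x, hE]
      ring
  refine ⟨part2', ?_⟩
  intro y₁ y₂ hne hE1 hE2
  have hθ3 : (θ ^ 3) ^ q = -θ ^ 3 := by rw [pow_right_comm, hθ]; ring
  -- Step A: the perp of the hyperplane is the F-span of (α, β, θ)
  have hbs1 : ∀ s : K, s ^ q = s → ∀ v w : K × K × K,
      bhat K q (s • v) w = s * bhat K q v w := by
    intro s hs v w
    obtain ⟨v1, v2, v3⟩ := v
    simp only [Prod.smul_mk, smul_eq_mul, bhat, mul_pow, hs]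
    ring
  have hperp : perpSet K q {v | bhat K q v (α, β, θ) = 0} =
      {v : K × K × K | ∃ t : K, t ^ q = t ∧ v = (t * α, t * β, t * θ)} := by
    apply subset_antisymm
    · intro v hv
      obtain ⟨x, y, z⟩ := v
      have he1P : ((1 : K), (0 : K), (0 : K)) ∈ {v : K × K × K | bhat K q v (α, β, θ) = 0} := by
        simp only [Set.mem_setOf_eq, bhat, one_pow, zero_pow hq0, zero_mul, mul_zero, hθ]
        ring
      have h0 := hv _ he1P
      simp only [bhat, one_pow, zero_pow hq0, zero_mul, mul_zero] at h0
      have hz : z ^ q = -z := by linear_combination -h0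
      have hu1 : ((-θ * (β ^ q + β), 2 * θ ^ 2, (0 : K)) : K × K × K) ∈
          {v : K × K × K | bhat K q v (α, β, θ) = 0} := by
        simp only [Set.mem_setOf_eq, bhat, mul_pow, hsub, hF, hneg, hqq, hθ2, hθ, h2q,
          one_pow, zero_pow hq0, zero_mul, mul_zero]
        ring
      have hu2 : ((-θ ^ 2 * (β ^ q - β), 2 * θ ^ 3, (0 : K)) : K × K × K) ∈
          {v : K × K × K | bhat K q v (α, β, θ) = 0} := by
        simp only [Set.mem_setOf_eq, bhat, mul_pow, hsub, hF, hneg, hqq, hθ2, hθ3, hθ, h2q,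
          one_pow, zero_pow hq0, zero_mul, mul_zero]
        ring
      have hu3 : ((θ * (α ^ q + α), (0 : K), 2 * θ ^ 2) : K × K × K) ∈
          {v : K × K × K | bhat K q v (α, β, θ) = 0} := by
        simp only [Set.mem_setOf_eq, bhat, mul_pow, hsub, hF, hneg, hqq, hθ2, hθ, h2q,
          one_pow, zero_pow hq0, zero_mul, mul_zero]
        ring
      have hu4 : ((θ ^ 2 * (α ^ q - α), (0 : K), 2 * θ ^ 3) : K × K × K) ∈
          {v : K × K × K | bhat K q v (α, β, θ) = 0} := by
        simp only [Set.mem_setOf_eq, bhat, mul_pow, hsub, hF, hneg, hqq, hθ2, hθ3, hθ, h2q,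
          one_pow, zero_pow hq0, zero_mul, mul_zero]
        ring
      have hc1 := hv _ hu1
      have hc2 := hv _ hu2
      have hc3 := hv _ hu3
      have hc4 := hv _ hu4
      simp only [bhat, mul_pow, hsub, hF, hneg, hqq, hθ2, hθ3, hθ, h2q, hz,
        one_pow, zero_pow hq0, zero_mul, mul_zero] at hc1 hc2 hc3 hc4
      have hyz : θ * y = z * β := by
        have h4 : 4 * θ ^ 2 * (θ * y - z * β) = 0 := by
          linear_combination θ * hc1 - hc2
        have h4ne : (4 : K) * θ ^ 2 ≠ 0 := by
          have h4' : (4 : K) = 2 * 2 := by norm_num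
          rw [h4']
          exact mul_ne_zero (mul_ne_zero h2 h2) hθ2ne
        have := (mul_eq_zero.mp h4).resolve_left h4ne
        linear_combination this
      have hxz : θ * x = z * α := by
        have h4 : 4 * θ ^ 2 * (θ * x - z * α) = 0 := by
          linear_combination hc4 - θ * hc3
        have h4ne : (4 : K) * θ ^ 2 ≠ 0 := by
          have h4' : (4 : K) = 2 * 2 := by norm_num
          rw [h4']
          exact mul_ne_zero (mul_ne_zero h2 h2) hθ2ne
        have := (mul_eq_zero.mp h4).resolve_left h4ne
        linear_combination this
      refine ⟨z / θ, ?_, ?_⟩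
      · rw [div_pow, hz, hθ, neg_div_neg_eq]
      · simp only [Prod.mk.injEq]
        refine ⟨?_, ?_, ?_⟩
        · field_simp; linear_combination hxz
        · field_simp; linear_combination hyz
        · field_simp
    · rintro v ⟨t, ht, rfl⟩ u hu
      have hvt : ((t * α, t * β, t * θ) : K × K × K) = t • (α, β, θ) := by
        simp [Prod.smul_mk, smul_eq_mul]
      rw [hvt, hbs1 t ht, hbsymm, hu]
      ring
  -- the bhat value on elements of the slab
  have hbσ : ∀ x t : K, t ^ q = t →
      bhat K q (x + t * α, t * β, t * θ) (α, β, θ) =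
        2 * t * (β ^ q * β - θ * (α ^ q - α)) + θ * (x - x ^ q) := by
    intro x t ht
    simp only [bhat, mul_pow, hF, hsub, hneg, hqq, hθ, ht]
    ring
  -- Step B: the span of l and the perp
  have hT1 : spanF K q (l ∪ {v : K × K × K | ∃ t : K, t ^ q = t ∧ v = (t * α, t * β, t * θ)}) =
      {v : K × K × K | ∃ x t : K, t ^ q = t ∧ v = (x + t * α, t * β, t * θ)} := by
    apply spanF_eq' K
    · refine ⟨⟨0, 0, zero_pow hq0, by simp; rfl⟩, ?_, ?_, ?_⟩
      · rintro u ⟨x, t, ht, rfl⟩ v ⟨x', t', ht', rfl⟩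
        refine ⟨x + x', t + t', by rw [hF, ht, ht'], ?_⟩
        simp only [Prod.mk_add_mk, Prod.mk.injEq]
        refine ⟨by ring, by ring, by ring⟩
      · rintro u ⟨x, t, ht, rfl⟩
        refine ⟨-x, -t, by rw [hneg, ht], ?_⟩
        simp only [Prod.neg_mk, Prod.mk.injEq]
        refine ⟨by ring, by ring, by ring⟩
      · rintro a ha v ⟨x, t, ht, rfl⟩
        refine ⟨a * x, a * t, by rw [mul_pow, ha, ht], ?_⟩
        simp only [Prod.smul_mk, smul_eq_mul, Prod.mk.injEq]
        refine ⟨by ring, by ring, by ring⟩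
    · rintro v (hv | hv)
      · rw [hl] at hv
        obtain ⟨x, rfl⟩ := hv
        exact ⟨x, 0, zero_pow hq0, by simp⟩
      · obtain ⟨t, ht, rfl⟩ := hv
        exact ⟨0, t, ht, by simp⟩
    · intro V hV hSV v hv
      obtain ⟨x, t, ht, rfl⟩ := hv
      have h1 : ((x : K), (0 : K), (0 : K)) ∈ V := hSV (Or.inl (by rw [hl]; exact ⟨x, rfl⟩))
      have h2 : ((t * α, t * β, t * θ) : K × K × K) ∈ V := hSV (Or.inr ⟨t, ht, rfl⟩)
      have h3 := hV.2.1 _ h1 _ h2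
      simpa [Prod.mk_add_mk] using h3
  -- Step C: sigma
  have hσ : {v : K × K × K | ∃ x t : K, t ^ q = t ∧ v = (x + t * α, t * β, t * θ)} ∩
      {v : K × K × K | bhat K q v (α, β, θ) = 0} =
      {v : K × K × K | ∃ x t : K, t ^ q = t ∧
        2 * t * (β ^ q * β - θ * (α ^ q - α)) + θ * (x - x ^ q) = 0 ∧
        v = (x + t * α, t * β, t * θ)} := by
    ext v
    simp only [Set.mem_inter_iff, Set.mem_setOf_eq]
    constructor
    · rintro ⟨⟨x, t, ht, rfl⟩, hb⟩
      rw [hbσ x t ht] at hb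
      exact ⟨x, t, ht, hb, rfl⟩
    · rintro ⟨x, t, ht, hcon, rfl⟩
      exact ⟨⟨x, t, ht, rfl⟩, by rw [hbσ x t ht]; exact hcon⟩
  -- Step D: the span Sigma of lY y₁ and sigma
  have hSig : spanF K q (lY y₁ ∪ {v : K × K × K | ∃ x t : K, t ^ q = t ∧
        2 * t * (β ^ q * β - θ * (α ^ q - α)) + θ * (x - x ^ q) = 0 ∧
        v = (x + t * α, t * β, t * θ)}) =
      {v : K × K × K | ∃ c d x t : K, c ^ q = c ∧ d ^ q = d ∧ t ^ q = t ∧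
        2 * t * (β ^ q * β - θ * (α ^ q - α)) + θ * (x - x ^ q) = 0 ∧
        v = (c - d * (y₁ ^ (q + 1)) / (2 * θ) + x + t * α, d * y₁ + t * β, (d + t) * θ)} := by
    apply spanF_eq' K
    · refine ⟨⟨0, 0, 0, 0, zero_pow hq0, zero_pow hq0, zero_pow hq0, ?_, by simp; rfl⟩, ?_, ?_, ?_⟩
      · rw [zero_pow hq0]; ring
      · rintro u ⟨c, d, x, t, hc, hd, ht, hcon, rfl⟩ v ⟨c', d', x', t', hc', hd', ht', hcon', rfl⟩
        refine ⟨c + c', d + d', x + x', t + t', by rw [hF, hc, hc'], by rw [hF, hd, hd'],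
          by rw [hF, ht, ht'], ?_, ?_⟩
        · rw [hF]
          linear_combination hcon + hcon'
        · simp only [Prod.mk_add_mk, Prod.mk.injEq]
          refine ⟨by ring, by ring, by ring⟩
      · rintro u ⟨c, d, x, t, hc, hd, ht, hcon, rfl⟩
        refine ⟨-c, -d, -x, -t, by rw [hneg, hc], by rw [hneg, hd], by rw [hneg, ht], ?_, ?_⟩
        · rw [hneg]
          linear_combination -hcon
        · simp only [Prod.neg_mk, Prod.mk.injEq]
          refine ⟨by ring, by ring, by ring⟩
      · rintro a ha v ⟨c, d, x, t, hc, hd, ht, hcon, rfl⟩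
        refine ⟨a * c, a * d, a * x, a * t, by rw [mul_pow, ha, hc], by rw [mul_pow, ha, hd],
          by rw [mul_pow, ha, ht], ?_, ?_⟩
        · rw [mul_pow, ha]
          linear_combination a * hcon
        · simp only [Prod.smul_mk, smul_eq_mul, Prod.mk.injEq]
          refine ⟨by ring, by ring, by ring⟩
    · rintro v (hv | hv)
      · rw [hlY] at hv
        obtain ⟨x₀, rfl⟩ := hv
        refine ⟨2 * θ ^ 2 * (x₀ + x₀ ^ q), 2 * θ * (x₀ - x₀ ^ q), 0, 0, ?_, ?_,
          zero_pow hq0, ?_, ?_⟩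
        · simp only [mul_pow, h2q, hθ2, hF, hqq]; ring
        · simp only [mul_pow, h2q, hθ, hsub, hqq]; ring
        · rw [zero_pow hq0]; ring
        · simp only [Prod.mk.injEq]
          refine ⟨by field_simp; ring, by ring, by ring⟩
      · obtain ⟨x, t, ht, hcon, rfl⟩ := hv
        refine ⟨0, 0, x, t, zero_pow hq0, zero_pow hq0, ht, hcon, ?_⟩
        simp only [Prod.mk.injEq]
        refine ⟨by ring, by ring, by ring⟩
    · intro V hV hSV v hv
      obtain ⟨c, d, x, t, hc, hd, ht, hcon, rfl⟩ := hv
      have hdec : ((c - d * (y₁ ^ (q + 1)) / (2 * θ) + x + t * α, d * y₁ + t * β,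
          (d + t) * θ) : K × K × K) =
          c • ((1 : K), (0 : K), (0 : K)) + d • (-(y₁ ^ (q + 1)) / (2 * θ), y₁, θ) +
            (x + t * α, t * β, t * θ) := by
        simp only [Prod.smul_mk, smul_eq_mul, Prod.mk_add_mk, Prod.mk.injEq]
        refine ⟨by ring, by ring, by ring⟩
      rw [hdec]
      have hm1 : c • ((1 : K), (0 : K), (0 : K)) ∈ V :=
        hV.2.2.2 _ hc _ (hSV (Or.inl (he1mem y₁)))
      have hm2 : d • ((-(y₁ ^ (q + 1)) / (2 * θ), y₁, θ) : K × K × K) ∈ V :=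
        hV.2.2.2 _ hd _ (hSV (Or.inl (hvYmem y₁)))
      have hm3 : ((x + t * α, t * β, t * θ) : K × K × K) ∈ V := hSV (Or.inr ⟨x, t, ht, hcon, rfl⟩)
      exact hV.2.1 _ (hV.2.1 _ hm1 _ hm2) _ hm3
  rw [hperp, hT1, hσ, hSig]
  constructor
  · -- forward: y₂ = 2β - y₁
    intro hsub2
    have hv2 := hsub2 (hvYmem y₂)
    obtain ⟨c, d, x, t, hc, hd, ht, hcon, heq⟩ := hv2
    simp only [Prod.mk.injEq] at heq
    obtain ⟨h1c, h2c, h3c⟩ := heq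
    have hdt : d + t = 1 := by
      have := mul_right_cancel₀ hθ0 (h3c.symm.trans (one_mul θ).symm)
      exact this
    have hceq : c = -(y₂ ^ (q + 1)) / (2 * θ) + d * (y₁ ^ (q + 1)) / (2 * θ) - x - t * α := by
      linear_combination -h1c
    rw [hceq] at hc
    simp only [hq1, div_pow, mul_pow, hsub, hF, hneg, hqq, hθ, h2q, hd, ht] at hc
    have hy2q : y₂ ^ q = d * y₁ ^ q + t * β ^ q := by
      rw [h2c, hF, mul_pow, mul_pow, hd, ht]
    have hkey : y₂ ^ q * y₂ - d * (y₁ ^ q * y₁) - t * (β ^ q * β - θ * (α ^ q - α)) -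
        t * (β ^ q * β) = 0 := by
      have h16 : (16 : K) * θ ^ 3 ≠ 0 := by
        have : (16 : K) = 2 * 2 * 2 * 2 := by norm_num
        rw [this]
        exact mul_ne_zero (mul_ne_zero (mul_ne_zero (mul_ne_zero h2 h2) h2) h2)
          (pow_ne_zero 3 hθ0)
      have haux : 16 * θ ^ 3 * (y₂ ^ q * y₂ - d * (y₁ ^ q * y₁) -
          t * (β ^ q * β - θ * (α ^ q - α)) - t * (β ^ q * β)) = 0 := by
        field_simp at hc
        linear_combination 8 * θ ^ 3 * hc - 16 * θ ^ 3 * hcon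
      exact (mul_eq_zero.mp haux).resolve_left h16
    have ht1 : t = 1 - d := by linear_combination hdt
    have hE1' : y₁ ^ q * y₁ - (β ^ q * y₁ + β * y₁ ^ q) + θ * (α ^ q - α) = 0 := by
      rw [← hq1]; exact hE1
    have hd2 : (d - 1) * (d + 1) * (β ^ q * β - θ * (α ^ q - α)) = 0 := by
      rw [hy2q] at hkey
      rw [h2c] at hkey
      rw [ht1] at hkey
      linear_combination hkey + (d - d ^ 2) * hE1'
    rcases mul_eq_zero.mp hd2 with hd12 | hΔ0
    · rcases mul_eq_zero.mp hd12 with hd1 | hdm1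
      · exfalso
        have hdd : d = 1 := by linear_combination hd1
        have htt : t = 0 := by rw [hdd] at hdt; linear_combination hdt
        apply hne
        rw [hdd, htt] at h2c
        linear_combination -h2c
      · have hdd : d = -1 := by linear_combination hdm1
        have htt : t = 2 := by rw [hdd] at hdt; linear_combination hdt
        rw [hdd, htt] at h2c
        linear_combination h2c
    · exact absurd hΔ0 hΔ'
  · -- backward: construct the membership
    intro hy2
    have hy2q : y₂ ^ q = 2 * β ^ q - y₁ ^ q := by
      rw [hy2, hsub, mul_pow, h2q]
    -- membership of the basepoint vectors in S2
    have he1S2 : ∃ c d x t : K, c ^ q = c ∧ d ^ q = d ∧ t ^ q = t ∧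
        2 * t * (β ^ q * β - θ * (α ^ q - α)) + θ * (x - x ^ q) = 0 ∧
        (((1 : K), (0 : K), (0 : K)) : K × K × K) =
          (c - d * (y₁ ^ (q + 1)) / (2 * θ) + x + t * α, d * y₁ + t * β, (d + t) * θ) := by
      refine ⟨1, 0, 0, 0, one_pow q, zero_pow hq0, zero_pow hq0, ?_, ?_⟩
      · rw [zero_pow hq0]; ring
      · simp only [Prod.mk.injEq]
        refine ⟨by ring, by ring, by ring⟩
    have h4q : (4 : K) ^ q = 4 := by
      have h := hF 2 2
      rw [h2q] at h
      norm_num at h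
      exact h
    have hv2S2 : ∃ c d x t : K, c ^ q = c ∧ d ^ q = d ∧ t ^ q = t ∧
        2 * t * (β ^ q * β - θ * (α ^ q - α)) + θ * (x - x ^ q) = 0 ∧
        ((-(y₂ ^ (q + 1)) / (2 * θ), y₂, θ) : K × K × K) =
          (c - d * (y₁ ^ (q + 1)) / (2 * θ) + x + t * α, d * y₁ + t * β, (d + t) * θ) := by
      refine ⟨(-(y₂ ^ (q + 1)) - y₁ ^ (q + 1) + 4 * (β ^ q * β - θ * (α ^ q - α)) -
          4 * (θ * α)) / (2 * θ), -1,
          -(4 * (β ^ q * β - θ * (α ^ q - α))) / (2 * θ), 2,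
          ?_, by rw [hneg, one_pow], h2q, ?_, ?_⟩
      · rw [div_pow, mul_pow, h2q, hθ]
        simp only [hq1, hsub, hF, hneg, mul_pow, hqq, h4q, hΔq, hθ]
        rw [hy2q, hy2]
        field_simp
        linear_combination 4 * hE1
      · simp only [div_pow, hneg, mul_pow, h2q, h4q, hΔq, hθ]
        field_simp
        ring
      · simp only [Prod.mk.injEq]
        refine ⟨by field_simp; ring, by rw [hy2]; ring, by ring⟩
    intro v hv
    rw [hlY] at hv
    obtain ⟨x₀, rfl⟩ := hv
    obtain ⟨c, d, x, t, hc, hd, ht, hcon, heq⟩ := hv2S2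
    simp only [Prod.mk.injEq] at heq
    obtain ⟨h1c, h2c, h3c⟩ := heq
    have h1c' : -(2 * θ * y₂ ^ (q + 1)) = 4 * θ ^ 2 * c - 2 * θ * (d * y₁ ^ (q + 1)) +
        4 * θ ^ 2 * x + 4 * θ ^ 2 * (t * α) := by
      field_simp at h1c
      linear_combination 2 * θ * h1c
    have hcA : (2 * θ ^ 2 * (x₀ + x₀ ^ q)) ^ q = 2 * θ ^ 2 * (x₀ + x₀ ^ q) := by
      simp only [mul_pow, h2q, hθ2, hF, hqq]; ring
    have hdA : (2 * θ * (x₀ - x₀ ^ q)) ^ q = 2 * θ * (x₀ - x₀ ^ q) := by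
      simp only [mul_pow, h2q, hθ, hsub, hqq]; ring
    refine ⟨2 * θ ^ 2 * (x₀ + x₀ ^ q) + 2 * θ * (x₀ - x₀ ^ q) * c,
      2 * θ * (x₀ - x₀ ^ q) * d, 2 * θ * (x₀ - x₀ ^ q) * x, 2 * θ * (x₀ - x₀ ^ q) * t,
      by rw [hF, hcA, mul_pow, hdA, hc], by rw [mul_pow, hdA, hd], by rw [mul_pow, hdA, ht],
      ?_, ?_⟩
    · have hxq : (2 * θ * (x₀ - x₀ ^ q) * x) ^ q = 2 * θ * (x₀ - x₀ ^ q) * x ^ q := by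
        rw [mul_pow, hdA]
      rw [hxq]
      linear_combination 2 * θ * (x₀ - x₀ ^ q) * hcon
    · simp only [Prod.mk.injEq]
      refine ⟨?_, ?_, ?_⟩
      · field_simp
        have h1c'' : -y₂ ^ (q + 1) = 2 * θ * c - d * y₁ ^ (q + 1) + 2 * θ * x + 2 * θ * t * α := by
          field_simp at h1c
          linear_combination h1c
        linear_combination (x₀ - x₀ ^ q) * h1c''
      · linear_combination 2 * θ * (x₀ - x₀ ^ q) * h2c
      · linear_combination 2 * θ * (x₀ - x₀ ^ q) * h3c


end PseudoOval
end

section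
/- The simple graph on vertex set K × K, in which two distinct vertices (m₁,m₂) and (r₁,r₂) are adjacent if and only if (m₁−r₁)^{q+1} + (m₂−r₂)^{q+1} = 0, is isomorphic to the bilinear forms graph Bil₂(q), that is, to the simple graph whose vertices are the 2×2 matrices over F, two matrices A and B being adjacent if and only if A − B has rank 1. -/
namespace HermitianScheme

/-- The quotient graph `(Σ, R_{1'})` of the scheme `𝔛_P`, on vertex set `K × K`. -/
def Gamma (K : Type*) [Field K] (q : ℕ) : SimpleGraph (K × K) where
  Adj m r := m ≠ r ∧ (m.1 - r.1) ^ (q + 1) + (m.2 - r.2) ^ (q + 1) = 0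
  symm := by
    constructor
    rintro a b ⟨hne, h⟩
    refine ⟨hne.symm, ?_⟩
    have key : (b.1 - a.1) ^ (q + 1) + (b.2 - a.2) ^ (q + 1)
        = (-1 : K) ^ (q + 1) * ((a.1 - b.1) ^ (q + 1) + (a.2 - b.2) ^ (q + 1)) := by
      rw [mul_add, ← neg_pow, ← neg_pow, neg_sub, neg_sub]
    rw [key, h, mul_zero]
  loopless := by constructor; intro a h; exact h.1 rfl

/-- The bilinear forms graph `Bil₂(q)`: vertices are the `2 × 2` matrices with
entries in the subfield `F = {a : K | a ^ q = a}` of order `q`; two matrices are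
adjacent iff their difference has rank `1` (rank computed over `K`, which agrees
with the rank over `F`). -/
def BilGraph (K : Type*) [Field K] (q : ℕ) :
    SimpleGraph (Matrix (Fin 2) (Fin 2) {a : K // a ^ q = a}) where
  Adj A B := (A.map (fun a => (a : K)) - B.map (fun a => (a : K))).rank = 1
  symm := by
    constructor
    intro A B h
    have hBA : B.map (fun a => (a : K)) - A.map (fun a => (a : K))
        = -(A.map (fun a => (a : K)) - B.map (fun a => (a : K))) :=
      (neg_sub _ _).symm
    rw [hBA]
    have hneg : ∀ M : Matrix (Fin 2) (Fin 2) K, (-M).rank = M.rank := by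
      intro M
      have hml : (-M).mulVecLin = -(M.mulVecLin) := by
        ext v i
        simp [Matrix.mulVecLin, Matrix.neg_mulVec]
      unfold Matrix.rank
      rw [hml, LinearMap.range_neg]
    rw [hneg]
    exact h
  loopless := by
    constructor
    intro A h
    simp only [sub_self] at h
    rw [Matrix.rank_zero] at h
    exact one_ne_zero h.symm

section Aux

variable {K : Type*} [Field K]

/-- `M.rank = 1` for a `2 × 2` matrix over a field iff `M ≠ 0` and `det M = 0`. -/
lemma rank_fin_two_one (M : Matrix (Fin 2) (Fin 2) K) :
    M.rank = 1 ↔ M ≠ 0 ∧ M.det = 0 := by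
  have hle : M.rank ≤ 2 := by
    simpa using M.rank_le_card_width
  have h0 : M.rank = 0 ↔ M = 0 := by
    constructor
    · intro h
      have hrange : LinearMap.range M.mulVecLin = ⊥ := by
        rw [Matrix.rank] at h
        exact Submodule.finrank_eq_zero.mp h
      have hz : M.mulVecLin = 0 := LinearMap.range_eq_bot.mp hrange
      ext i j
      have h1 := LinearMap.congr_fun hz (Pi.single j 1)
      have h2 := congrFun h1 i
      simpa [Matrix.mulVecLin_apply, Matrix.mulVec_single_one] using h2
    · rintro rfl; exact Matrix.rank_zero
  have h2 : M.rank = 2 ↔ M.det ≠ 0 := by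
    constructor
    · intro h hdet
      have hrange : LinearMap.range M.mulVecLin = ⊤ := by
        apply Submodule.eq_top_of_finrank_eq
        rw [Matrix.rank] at h
        simpa [Module.finrank_fintype_fun_eq_card] using h
      have hs : Function.Surjective M.mulVec := LinearMap.range_eq_top.mp hrange
      have hu : IsUnit M := Matrix.mulVec_surjective_iff_isUnit.mp hs
      exact absurd hdet (by simpa using ((Matrix.isUnit_iff_isUnit_det M).mp hu).ne_zero)
    · intro h
      have hu : IsUnit M := (Matrix.isUnit_iff_isUnit_det M).mpr (Ne.isUnit h)
      simpa using Matrix.rank_of_isUnit M hu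
  constructor
  · intro h
    have hM : M ≠ 0 := by
      intro hM
      have := h0.mpr hM
      omega
    refine ⟨hM, ?_⟩
    by_contra hdet
    have := h2.mpr hdet
    omega
  · rintro ⟨hM, hdet⟩
    have r0 : M.rank ≠ 0 := fun h => hM (h0.mp h)
    have r2 : M.rank ≠ 2 := fun h => (h2.mp h) hdet
    omega

variable (q : ℕ) (ω : K)

/-- The `K`-valued matrix attached to the pair `(u, w)`. -/
def MK (u w : K) : Matrix (Fin 2) (Fin 2) K :=
  !![(u + u ^ q + (w + w ^ q)) / 2, ω * (u - u ^ q - (w - w ^ q)) / 2;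
     (u - u ^ q + (w - w ^ q)) / (2 * ω), (u + u ^ q - (w + w ^ q)) / 2]

variable (hodd : Odd q) (hfa : ∀ x y : K, (x + y) ^ q = x ^ q + y ^ q)
  (hq2 : ∀ x : K, (x ^ q) ^ q = x) (h2 : (2 : K) ≠ 0) (hω : ω ^ q = -ω) (hω0 : ω ≠ 0)

section
include hodd hfa

lemma frob_sub (x y : K) : (x - y) ^ q = x ^ q - y ^ q := by
  have := hfa x (-y)
  rwa [hodd.neg_pow, ← sub_eq_add_neg, ← sub_eq_add_neg] at this

omit hodd h2 in
lemma frob_two : (2 : K) ^ q = 2 := by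
  have h := hfa 1 1
  rw [one_pow] at h
  norm_num at h
  exact h

omit hodd hfa in
include h2 hω0 in
lemma MK_det (u w : K) : (MK q ω u w).det = u ^ (q + 1) - w ^ (q + 1) := by
  rw [MK, Matrix.det_fin_two_of, pow_succ, pow_succ]
  field_simp
  ring

include hq2 hω h2 hω0 in
lemma MK_fixed (u w : K) (i j : Fin 2) : (MK q ω u w i j) ^ q = MK q ω u w i j := by
  have h2q : (2 : K) ^ q = 2 := frob_two q hfa
  have hsub : ∀ x y : K, (x - y) ^ q = x ^ q - y ^ q := frob_sub q hodd hfa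
  fin_cases i <;> fin_cases j <;>
    simp only [MK, Matrix.cons_val', Matrix.cons_val_zero, Matrix.cons_val_one,
      Matrix.head_cons, Matrix.head_fin_const, Matrix.empty_val', Matrix.cons_val_fin_one,
      Matrix.of_apply, Fin.mk_zero, Fin.mk_one]
  · simp only [div_pow, hfa, hq2, h2q]
    ring
  · simp only [div_pow, mul_pow, hsub, hq2, h2q, hω]
    ring
  · simp only [div_pow, mul_pow, hfa, hsub, hq2, h2q, hω]
    field_simp
    ring
  · simp only [div_pow, hfa, hsub, hq2, h2q]
    ring

end

lemma MK_sub (hodd : Odd q) (hfa : ∀ x y : K, (x + y) ^ q = x ^ q + y ^ q)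
    (u w u' w' : K) : MK q ω u w - MK q ω u' w' = MK q ω (u - u') (w - w') := by
  have hsub : ∀ x y : K, (x - y) ^ q = x ^ q - y ^ q := frob_sub q hodd hfa
  ext i j
  fin_cases i <;> fin_cases j <;>
    simp only [MK, Matrix.sub_apply, Matrix.cons_val', Matrix.cons_val_zero, Matrix.cons_val_one,
      Matrix.head_cons, Matrix.head_fin_const, Matrix.empty_val', Matrix.cons_val_fin_one,
      Matrix.of_apply, Fin.mk_zero, Fin.mk_one, hsub] <;>
    ring

lemma MK_eq_zero (h2 : (2 : K) ≠ 0) (hω0 : ω ≠ 0) (u w : K)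
    (h : MK q ω u w = 0) : u = 0 ∧ w = 0 := by
  have e00 := congrFun (congrFun h 0) 0
  have e01 := congrFun (congrFun h 0) 1
  have e10 := congrFun (congrFun h 1) 0
  have e11 := congrFun (congrFun h 1) 1
  simp only [MK, Matrix.cons_val', Matrix.cons_val_zero, Matrix.cons_val_one,
    Matrix.head_cons, Matrix.head_fin_const, Matrix.empty_val', Matrix.cons_val_fin_one,
    Matrix.of_apply, Matrix.zero_apply, div_eq_zero_iff] at e00 e01 e10 e11
  have hs1 : u + u ^ q + (w + w ^ q) = 0 := by tauto
  have hs2 : u + u ^ q - (w + w ^ q) = 0 := by tauto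
  have ht1 : u - u ^ q - (w - w ^ q) = 0 := by
    rcases e01 with h' | h'
    · rcases mul_eq_zero.mp h' with h'' | h''
      · exact absurd h'' hω0
      · exact h''
    · exact absurd h' h2
  have ht2 : u - u ^ q + (w - w ^ q) = 0 := by
    rcases e10 with h' | h'
    · exact h'
    · rcases mul_eq_zero.mp h' with h'' | h''
      · exact absurd h'' h2
      · exact absurd h'' hω0
  have hu2 : (2 : K) * (2 * u) = 0 := by linear_combination hs1 + hs2 + ht1 + ht2
  have hw2 : (2 : K) * (2 * w) = 0 := by linear_combination hs1 - hs2 - ht1 + ht2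
  have h2u : ∀ x : K, (2 : K) * x = 0 → x = 0 := by
    intro x hx
    rcases mul_eq_zero.mp hx with h' | h'
    · exact absurd h' h2
    · exact h'
  exact ⟨h2u _ (h2u _ hu2), h2u _ (h2u _ hw2)⟩


variable (c : K)

omit hodd in
lemma MK_zero (hq0 : q ≠ 0) : MK q ω 0 0 = 0 := by
  ext i j
  fin_cases i <;> fin_cases j <;>
    simp [MK, zero_pow hq0]

/-- The forward map of the isomorphism. -/
def toMat : K × K → Matrix (Fin 2) (Fin 2) {a : K // a ^ q = a} :=
  fun m => Matrix.of fun i j =>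
    ⟨MK q ω m.1 (c * m.2) i j, MK_fixed q ω hodd hfa hq2 h2 hω hω0 m.1 (c * m.2) i j⟩

/-- The inverse map of the isomorphism. -/
def invMat : Matrix (Fin 2) (Fin 2) {a : K // a ^ q = a} → K × K :=
  fun A =>
    (((A 0 0 : K) + (A 1 1 : K) + (A 0 1 : K) / ω + ω * (A 1 0 : K)) / 2,
     ((((A 0 0 : K) - (A 1 1 : K) - (A 0 1 : K) / ω + ω * (A 1 0 : K)) / 2) / c))

lemma toMat_leftInv (hc0 : c ≠ 0) (m : K × K) :
    invMat q ω c (toMat q ω hodd hfa hq2 h2 hω hω0 c m) = m := by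
  obtain ⟨m1, m2⟩ := m
  simp only [toMat, invMat, MK, Matrix.of_apply, Matrix.cons_val', Matrix.cons_val_zero,
    Matrix.cons_val_one, Matrix.head_cons, Matrix.head_fin_const, Matrix.empty_val',
    Matrix.cons_val_fin_one]
  rw [Prod.mk.injEq]
  have h16 : (16 : K) ≠ 0 := by
    have h4 := pow_ne_zero 4 h2
    norm_num at h4
    exact h4
  constructor
  · rw [div_eq_iff h2]
    field_simp [hω0]
    ring
  · rw [div_eq_iff hc0, div_eq_iff h2]
    field_simp [hω0]
    ring

lemma toMat_rightInv (hc0 : c ≠ 0) (A : Matrix (Fin 2) (Fin 2) {a : K // a ^ q = a}) :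
    toMat q ω hodd hfa hq2 h2 hω hω0 c (invMat q ω c A) = A := by
  have h2q : (2 : K) ^ q = 2 := frob_two q hfa
  have hsub : ∀ x y : K, (x - y) ^ q = x ^ q - y ^ q := frob_sub q hodd hfa
  have ha := (A 0 0).2
  have hb := (A 0 1).2
  have hcc := (A 1 0).2
  have hd := (A 1 1).2
  have hcw : ∀ x : K, c * (x / c) = x := fun x => by field_simp
  have hu_q : (((A 0 0 : K) + (A 1 1 : K) + (A 0 1 : K) / ω + ω * (A 1 0 : K)) / 2) ^ q
      = ((A 0 0 : K) + (A 1 1 : K) - (A 0 1 : K) / ω - ω * (A 1 0 : K)) / 2 := by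
    simp only [div_pow, mul_pow, hfa, h2q, hω, ha, hb, hcc, hd]
    field_simp [hω0]
    ring
  have hw_q : (((A 0 0 : K) - (A 1 1 : K) - (A 0 1 : K) / ω + ω * (A 1 0 : K)) / 2) ^ q
      = ((A 0 0 : K) - (A 1 1 : K) + (A 0 1 : K) / ω - ω * (A 1 0 : K)) / 2 := by
    simp only [div_pow, mul_pow, hfa, hsub, h2q, hω, ha, hb, hcc, hd]
    field_simp [hω0]
    ring
  ext i j
  simp only [toMat, invMat, Matrix.of_apply, hcw]
  fin_cases i <;> fin_cases j <;>
    simp only [MK, Matrix.cons_val', Matrix.cons_val_zero, Matrix.cons_val_one,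
      Matrix.head_cons, Matrix.head_fin_const, Matrix.empty_val', Matrix.cons_val_fin_one,
      Matrix.of_apply, Fin.mk_zero, Fin.mk_one, Fin.zero_eta, Fin.isValue, hu_q, hw_q]
  · rw [div_eq_iff h2]
    field_simp
    ring
  · rw [div_eq_iff h2]
    field_simp
    ring
  · rw [div_eq_iff (by exact mul_ne_zero h2 hω0 : (2:K) * ω ≠ 0)]
    field_simp
    ring
  · rw [div_eq_iff h2]
    field_simp
    ring

lemma toMat_adj (hc : c ^ (q + 1) = -1) (hc0 : c ≠ 0) (m r : K × K) :
    ((toMat q ω hodd hfa hq2 h2 hω hω0 c m).map (fun a => (a : K))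
      - (toMat q ω hodd hfa hq2 h2 hω hω0 c r).map (fun a => (a : K))).rank = 1
    ↔ (m ≠ r ∧ (m.1 - r.1) ^ (q + 1) + (m.2 - r.2) ^ (q + 1) = 0) := by
  have hq0 : q ≠ 0 := by
    rintro rfl
    simp [Nat.odd_iff] at hodd
  have hmap : ∀ m : K × K,
      (toMat q ω hodd hfa hq2 h2 hω hω0 c m).map (fun a => (a : K))
        = MK q ω m.1 (c * m.2) := by
    intro m; ext i j; rfl
  rw [hmap, hmap, MK_sub q ω hodd hfa,
    show c * m.2 - c * r.2 = c * (m.2 - r.2) from (mul_sub c _ _).symm,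
    rank_fin_two_one, MK_det q ω h2 hω0]
  have h1 : MK q ω (m.1 - r.1) (c * (m.2 - r.2)) ≠ 0 ↔ m ≠ r := by
    constructor
    · intro hne hmr
      apply hne
      rw [hmr]
      simpa using MK_zero q ω hq0
    · intro hne h0
      obtain ⟨e1, e2⟩ := MK_eq_zero q ω h2 hω0 _ _ h0
      apply hne
      have f1 : m.1 = r.1 := sub_eq_zero.mp e1
      have f2 : m.2 = r.2 := by
        rcases mul_eq_zero.mp e2 with h' | h'
        · exact absurd h' hc0
        · exact sub_eq_zero.mp h'
      exact Prod.ext f1 f2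
  have hdet : (m.1 - r.1) ^ (q + 1) - (c * (m.2 - r.2)) ^ (q + 1)
      = (m.1 - r.1) ^ (q + 1) + (m.2 - r.2) ^ (q + 1) := by
    rw [mul_pow, hc]
    ring
  rw [hdet]
  exact and_congr h1 Iff.rfl

end Aux

/-- Proposition 6: the quotient graph `(Σ, R_{1'})` is isomorphic to the
bilinear forms graph `Bil₂(q)`. -/
theorem statement11 (q : ℕ) (hq : IsPrimePow q) (hodd : Odd q)
    (K : Type*) [Field K] [Fintype K] (hK : Fintype.card K = q ^ 2) :
    Nonempty (Gamma K q ≃g BilGraph K q) := by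
  classical
  -- basic facts about `q`
  have hq3 : 3 ≤ q := by
    have h2le := hq.two_le
    have hne2 : q ≠ 2 := by
      rintro rfl
      simp [Nat.odd_iff] at hodd
    omega
  obtain ⟨p, k, hpp, hk, hpk⟩ := hq
  have hp : p.Prime := hpp.nat_prime
  -- the characteristic of `K` is `p`
  have hcharP : CharP K (ringChar K) := ringChar.charP K
  obtain ⟨n, hrp, hcard⟩ := FiniteField.card K (ringChar K)
  have hpr : ringChar K = p := by
    have h1 : (ringChar K) ^ (n : ℕ) = p ^ (2 * k) := by
      rw [← hcard, hK, ← hpk]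
      ring
    have hdvd : ringChar K ∣ p ^ (2 * k) := h1 ▸ dvd_pow_self _ n.pos.ne'
    exact (Nat.prime_dvd_prime_iff_eq hrp hp).mp (hrp.dvd_of_dvd_pow hdvd)
  haveI : CharP K p := hpr ▸ hcharP
  haveI : Fact p.Prime := ⟨hp⟩
  have hpne2 : p ≠ 2 := by
    rintro rfl
    rw [← hpk] at hodd
    have h2d : 2 ∣ 2 ^ k := dvd_pow_self 2 hk.ne'
    rw [Nat.odd_iff] at hodd
    omega
  have h2 : (2 : K) ≠ 0 := by
    intro h20
    have h20' : ((2 : ℕ) : K) = 0 := by exact_mod_cast h20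
    have := (CharP.cast_eq_zero_iff K p 2).mp h20'
    exact hpne2 ((Nat.prime_dvd_prime_iff_eq hp Nat.prime_two).mp this)
  have hfa : ∀ x y : K, (x + y) ^ q = x ^ q + y ^ q := by
    intro x y
    rw [← hpk]
    exact add_pow_char_pow x y p k
  have hq2 : ∀ x : K, (x ^ q) ^ q = x := by
    intro x
    rw [← pow_mul, show q * q = q ^ 2 from (sq q).symm, ← hK]
    exact FiniteField.pow_card x
  -- cyclic structure of `Kˣ`
  obtain ⟨g, hg⟩ := IsCyclic.exists_generator (α := Kˣ)
  have hcardu : Fintype.card Kˣ = q ^ 2 - 1 := by rw [Fintype.card_units, hK]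
  have horder : orderOf g = q ^ 2 - 1 := by
    rw [orderOf_eq_card_of_forall_mem_zpowers hg, Nat.card_eq_fintype_card, hcardu]
  have h1q : 1 ≤ q := by omega
  have h1q2 : 1 ≤ q ^ 2 := Nat.one_le_pow _ _ (by omega)
  have hfac : (q + 1) * (q - 1) = q ^ 2 - 1 := by
    zify [h1q, h1q2]
    ring
  -- a `(q+1)`-st root of `-1`
  obtain ⟨j, hj⟩ := (Submonoid.mem_powers_iff _ _).mp
    (mem_powers_iff_mem_zpowers.mpr (hg (-1)))
  have hj2 : g ^ (j * (q - 1)) = 1 := by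
    rw [pow_mul, hj]
    exact Even.neg_one_pow (Nat.Odd.sub_odd hodd odd_one)
  have hdvd : (q + 1) * (q - 1) ∣ j * (q - 1) := by
    rw [hfac, ← horder]
    exact orderOf_dvd_of_pow_eq_one hj2
  have hdvd2 : (q + 1) ∣ j :=
    (Nat.mul_dvd_mul_iff_right (show 0 < q - 1 by omega)).mp hdvd
  obtain ⟨t, ht⟩ := hdvd2
  set c : K := ((g ^ t : Kˣ) : K) with hcdef
  have hcu : ((g ^ t) ^ (q + 1) : Kˣ) = -1 := by
    rw [← pow_mul, mul_comm t (q + 1), ← ht]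
    exact hj
  have hc : c ^ (q + 1) = -1 := by
    have := congrArg Units.val hcu
    push_cast at this
    exact_mod_cast this
  have hc0 : c ≠ 0 := by
    rw [hcdef]
    exact Units.ne_zero _
  -- a nonzero `ω` with `ω ^ q = -ω`
  obtain ⟨s, hs⟩ := Odd.add_one hodd
  have hgq : (g : K) ^ (q ^ 2 - 1) = 1 := by
    have h := pow_orderOf_eq_one g
    rw [horder] at h
    have := congrArg Units.val h
    push_cast at this
    exact_mod_cast this
  have harith : s * (q - 1) + s * (q - 1) = (q + 1) * (q - 1) := by
    have : (q + 1) * (q - 1) = (s + s) * (q - 1) := by rw [← hs]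
    rw [this]
    ring
  have hsq : (g : K) ^ (s * (q - 1)) * (g : K) ^ (s * (q - 1)) = 1 := by
    rw [← pow_add, harith, hfac]
    exact hgq
  have hspos : 0 < s * (q - 1) := by
    have hs2 : 2 ≤ s := by omega
    have : 2 ≤ q - 1 := by omega
    positivity
  have hne1 : (g : K) ^ (s * (q - 1)) ≠ 1 := by
    intro h1
    have hu : (g : Kˣ) ^ (s * (q - 1)) = 1 := by
      apply Units.ext
      push_cast
      exact h1
    have hd := orderOf_dvd_of_pow_eq_one hu
    rw [horder] at hd
    have hle := Nat.le_of_dvd hspos hd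
    have := harith
    rw [hfac] at this
    omega
  have hmm : (g : K) ^ (s * (q - 1)) = -1 := by
    rcases mul_self_eq_one_iff.mp hsq with h | h
    · exact absurd h hne1
    · exact h
  set ω : K := (g : K) ^ s with hωdef
  have hω0 : ω ≠ 0 := pow_ne_zero _ (Units.ne_zero g)
  have hω : ω ^ q = -ω := by
    have hq1 : q = (q - 1) + 1 := by omega
    calc ω ^ q = ω ^ ((q - 1) + 1) := by rw [← hq1]
      _ = ω ^ (q - 1) * ω := pow_succ ω (q - 1)
      _ = (g : K) ^ (s * (q - 1)) * ω := by rw [hωdef, ← pow_mul]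
      _ = -1 * ω := by rw [hmm]
      _ = -ω := by ring
  -- assemble the isomorphism
  refine ⟨⟨⟨toMat q ω hodd hfa hq2 h2 hω hω0 c, invMat q ω c,
    toMat_leftInv q ω hodd hfa hq2 h2 hω hω0 c hc0,
    toMat_rightInv q ω hodd hfa hq2 h2 hω hω0 c hc0⟩, ?_⟩⟩
  intro m r
  exact toMat_adj q ω hodd hfa hq2 h2 hω hω0 c hc hc0 m r

end HermitianScheme
end
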